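/- arXiv:2508.04871 — 10 statements merged into one kernel-verified Lean document; each statement's English description precedes it below -/
import Mathlib

section
/- Let A be a real n×n matrix. The continuous-time linear system ẋ = Ax is asymptotically stable (equivalently, A is Hurwitz, i.e., every eigenvalue of A over ℂ has strictly negative real part) if and only if there exists a symmetric positive definite matrix P ∈ ℝ^{n×n} such that AᵀP + PA is negative definite. -/
open Matrix Filter Topology

noncomputable section

/-- Entrywise positive part: `M⁺ = max(M, 0)`. -/
def matPos {m k : Type*} (M : Matrix m k ℝ) : Matrix m k ℝ :=
  Matrix.of fun i j => max (M i j) 0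

/-- Entrywise negative part: `M⁻ = M⁺ − M`. -/
def matNeg {m k : Type*} (M : Matrix m k ℝ) : Matrix m k ℝ :=
  matPos M - M

/-- Diagonal part of a square matrix. -/
def diagPart {m : Type*} [DecidableEq m] (A : Matrix m m ℝ) : Matrix m m ℝ :=
  Matrix.of fun i j => if i = j then A i j else 0

/-- A real square matrix is Hurwitz if every root of its characteristic polynomial
over `ℂ` has strictly negative real part. -/
def IsHurwitz {m : Type*} [Fintype m] [DecidableEq m] (A : Matrix m m ℝ) : Prop :=
  ∀ μ : ℂ, ((A.map Complex.ofReal).charpoly).IsRoot μ → μ.re < 0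

/-- A real square matrix is Schur stable if every root of its characteristic polynomial
over `ℂ` has modulus strictly less than one. -/
def IsSchur {m : Type*} [Fintype m] [DecidableEq m] (A : Matrix m m ℝ) : Prop :=
  ∀ μ : ℂ, ((A.map Complex.ofReal).charpoly).IsRoot μ → ‖μ‖ < 1

/-- A symmetric real matrix `P` is positive definite if `xᵀPx > 0` for all nonzero `x`. -/
def IsPosDefR {m : Type*} [Fintype m] (P : Matrix m m ℝ) : Prop :=
  P.IsSymm ∧ ∀ x : m → ℝ, x ≠ 0 → 0 < x ⬝ᵥ (P *ᵥ x)

/-- A symmetric real matrix `Q` is negative definite if `xᵀQx < 0` for all nonzero `x`. -/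
def IsNegDefR {m : Type*} [Fintype m] (Q : Matrix m m ℝ) : Prop :=
  Q.IsSymm ∧ ∀ x : m → ℝ, x ≠ 0 → x ⬝ᵥ (Q *ᵥ x) < 0

section CtLyapunovAux
open Polynomial Finset
open scoped NNReal ENNReal


lemma ct_eval_charpoly_det {k : ℕ} (M : Matrix (Fin k) (Fin k) ℂ) (μ : ℂ) :
    M.charpoly.eval μ = (μ • (1 : Matrix (Fin k) (Fin k) ℂ) - M).det := by
  rw [Matrix.charpoly, ← Polynomial.coe_evalRingHom, RingHom.map_det]
  congr 1
  ext i j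
  by_cases h : i = j
  · subst h; simp [charmatrix_apply_eq, Matrix.one_apply]
  · simp [charmatrix_apply_ne _ _ _ h, Matrix.one_apply, h]

lemma ct_isRoot_charpoly_iff {k : ℕ} (M : Matrix (Fin k) (Fin k) ℂ) (μ : ℂ) :
    M.charpoly.IsRoot μ ↔ ∃ v, v ≠ 0 ∧ M *ᵥ v = μ • v := by
  rw [Polynomial.IsRoot, ct_eval_charpoly_det, ← Matrix.exists_mulVec_eq_zero_iff]
  constructor
  · rintro ⟨v, hv, h⟩
    refine ⟨v, hv, ?_⟩
    have := h
    rw [Matrix.sub_mulVec, Matrix.smul_mulVec, Matrix.one_mulVec, sub_eq_zero] at this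
    exact this.symm
  · rintro ⟨v, hv, h⟩
    exact ⟨v, hv, by rw [Matrix.sub_mulVec, Matrix.smul_mulVec, Matrix.one_mulVec, h, sub_self]⟩


lemma ct_re_star_dot {k : ℕ} (P : Matrix (Fin k) (Fin k) ℝ) (v : Fin k → ℂ) :
    (star v ⬝ᵥ ((P.map Complex.ofReal) *ᵥ v)).re =
      (fun i => (v i).re) ⬝ᵥ (P *ᵥ fun i => (v i).re) +
      (fun i => (v i).im) ⬝ᵥ (P *ᵥ fun i => (v i).im) := by
  simp only [dotProduct, mulVec, Matrix.map_apply, Pi.star_apply, Finset.mul_sum,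
    Complex.re_sum, ← Finset.sum_add_distrib]
  refine Finset.sum_congr rfl fun i _ => Finset.sum_congr rfl fun j _ => ?_
  simp [Complex.mul_re, Complex.mul_im, RCLike.star_def, Complex.conj_re, Complex.conj_im]



lemma ct_star_mulVec_real {k : ℕ} (A : Matrix (Fin k) (Fin k) ℝ) (v : Fin k → ℂ) :
    (A.map Complex.ofReal) *ᵥ (star v) = star ((A.map Complex.ofReal) *ᵥ v) := by
  funext i
  simp only [mulVec, dotProduct, Matrix.map_apply, Pi.star_apply, RCLike.star_def, map_sum]
  refine Finset.sum_congr rfl fun j _ => ?_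
  simp [_root_.map_mul]

lemma ct_eig_qform {k : ℕ} (A P : Matrix (Fin k) (Fin k) ℝ) (μ : ℂ) (v : Fin k → ℂ)
    (hv : (A.map Complex.ofReal) *ᵥ v = μ • v) :
    star v ⬝ᵥ (((Aᵀ * P + P * A).map Complex.ofReal) *ᵥ v)
      = (starRingEnd ℂ μ + μ) * (star v ⬝ᵥ ((P.map Complex.ofReal) *ᵥ v)) := by
  have hmap : ((Aᵀ * P + P * A).map Complex.ofReal)
      = (A.map Complex.ofReal)ᵀ * (P.map Complex.ofReal)
        + (P.map Complex.ofReal) * (A.map Complex.ofReal) := by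
    have : ∀ (M N : Matrix (Fin k) (Fin k) ℝ),
        (M * N).map Complex.ofReal = M.map Complex.ofReal * N.map Complex.ofReal := fun M N =>
      Matrix.map_mul (f := Complex.ofRealHom)
    rw [Matrix.map_add, this, this, Matrix.transpose_map]
    exact fun a b => Complex.ofReal_add a b
  rw [hmap, Matrix.add_mulVec, dotProduct_add, ← Matrix.mulVec_mulVec, ← Matrix.mulVec_mulVec]
  rw [hv, Matrix.mulVec_smul, dotProduct_smul]
  have h1 : star v ⬝ᵥ ((A.map Complex.ofReal)ᵀ *ᵥ ((P.map Complex.ofReal) *ᵥ v))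
      = (starRingEnd ℂ μ) * (star v ⬝ᵥ ((P.map Complex.ofReal) *ᵥ v)) := by
    rw [Matrix.dotProduct_mulVec, Matrix.vecMul_transpose, ct_star_mulVec_real, hv]
    rw [star_smul]
    rw [smul_dotProduct]
    simp [smul_eq_mul]
  rw [h1, smul_eq_mul]
  ring


-- semidefinite helpers
lemma ct_posdef_nonneg {k : ℕ} {P : Matrix (Fin k) (Fin k) ℝ}
    (hP : ∀ x : Fin k → ℝ, x ≠ 0 → 0 < x ⬝ᵥ (P *ᵥ x)) (x : Fin k → ℝ) :
    0 ≤ x ⬝ᵥ (P *ᵥ x) := by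
  by_cases hx : x = 0
  · subst hx; simp
  · exact (hP x hx).le

lemma ct_negdef_nonpos {k : ℕ} {Q : Matrix (Fin k) (Fin k) ℝ}
    (hQ : ∀ x : Fin k → ℝ, x ≠ 0 → x ⬝ᵥ (Q *ᵥ x) < 0) (x : Fin k → ℝ) :
    x ⬝ᵥ (Q *ᵥ x) ≤ 0 := by
  by_cases hx : x = 0
  · subst hx; simp
  · exact (hQ x hx).le

lemma ct_re_im_ne_zero {k : ℕ} {v : Fin k → ℂ} (hv : v ≠ 0) :
    (fun i => (v i).re) ≠ 0 ∨ (fun i => (v i).im) ≠ 0 := by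
  by_contra h
  push_neg at h
  apply hv
  funext i
  have h1 := congrFun h.1 i
  have h2 := congrFun h.2 i
  simp only [Pi.zero_apply] at h1 h2 ⊢
  exact Complex.ext h1 h2


lemma ct_map_sub_one {k : ℕ} (A : Matrix (Fin k) (Fin k) ℝ) :
    (A - 1).map Complex.ofReal = A.map Complex.ofReal - 1 := by
  ext i j
  by_cases h : i = j <;> simp [Matrix.map_apply, Matrix.one_apply, h, Matrix.sub_apply]

lemma ct_det_map_ofReal {k : ℕ} (M : Matrix (Fin k) (Fin k) ℝ) :
    (M.map Complex.ofReal).det = (M.det : ℂ) := by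
  rw [show M.map Complex.ofReal = M.map Complex.ofRealHom from rfl]
  exact (RingHom.map_det Complex.ofRealHom M).symm

lemma ct_hurwitz_unit_sub_one {k : ℕ} {A : Matrix (Fin k) (Fin k) ℝ}
    (hA : ∀ μ : ℂ, ((A.map Complex.ofReal).charpoly).IsRoot μ → μ.re < 0) :
    IsUnit (A - 1).det := by
  rw [isUnit_iff_ne_zero]
  intro hdet
  have h1 : ((A - 1).map Complex.ofReal).det = 0 := by
    rw [ct_det_map_ofReal, hdet, Complex.ofReal_zero]
  rw [ct_map_sub_one] at h1
  have hroot : ((A.map Complex.ofReal).charpoly).IsRoot 1 := by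
    have : ((1 : ℂ) • (1 : Matrix (Fin k) (Fin k) ℂ) - A.map Complex.ofReal).det = 0 := by
      rw [one_smul]
      have : (1 : Matrix (Fin k) (Fin k) ℂ) - A.map Complex.ofReal
          = -(A.map Complex.ofReal - 1) := by rw [neg_sub]
      rw [this, Matrix.det_neg, h1, mul_zero]
    rw [Polynomial.IsRoot]
    rw [show ((A.map Complex.ofReal).charpoly).eval 1
      = ((1:ℂ) • (1 : Matrix (Fin k) (Fin k) ℂ) - A.map Complex.ofReal).det from ?_]
    · exact this
    · exact ct_eval_charpoly_det (A.map Complex.ofReal) 1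
  have := hA 1 hroot
  norm_num at this


lemma ct_exists_pow_entries_small {k : ℕ} (hk : 0 < k) (C : Matrix (Fin k) (Fin k) ℂ)
    (hspec : ∀ μ ∈ spectrum ℂ C, ‖μ‖₊ < 1) (δ : ℝ≥0) (hδ : 0 < δ) :
    ∃ m : ℕ, 0 < m ∧ ∀ i j, ‖(C ^ m) i j‖₊ ≤ δ := by
  letI : SeminormedAddCommGroup (Matrix (Fin k) (Fin k) ℂ) := Matrix.linftyOpSeminormedAddCommGroup
  letI : NormedRing (Matrix (Fin k) (Fin k) ℂ) := Matrix.linftyOpNormedRing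
  letI : NormedAlgebra ℂ (Matrix (Fin k) (Fin k) ℂ) := Matrix.linftyOpNormedAlgebra
  haveI : Nonempty (Fin k) := ⟨⟨0, hk⟩⟩
  letI : CompleteSpace (Matrix (Fin k) (Fin k) ℂ) :=
    (by infer_instance : CompleteSpace ((Fin k) → (Fin k) → ℂ))
  have hρ : spectralRadius ℂ C < 1 := by
    have := spectrum.spectralRadius_lt_of_forall_lt C (r := 1) hspec
    simpa using this
  obtain ⟨r, hr1, hr2⟩ := exists_between hρ
  have hr2' : r < 1 := hr2
  have hgel := spectrum.pow_nnnorm_pow_one_div_tendsto_nhds_spectralRadius C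
  have hev : ∀ᶠ m : ℕ in atTop, (‖C ^ m‖₊ : ENNReal) ^ (1 / (m : ℝ)) < r :=
    hgel.eventually_lt_const hr1
  -- r < 1 so r^m → 0
  have hrtop : r ≠ ⊤ := hr2.trans_le le_top |>.ne
  have hpow : Tendsto (fun m : ℕ => r ^ m) atTop (𝓝 0) :=
    ENNReal.tendsto_pow_atTop_nhds_zero_of_lt_one hr2'
  have hev2 : ∀ᶠ m : ℕ in atTop, r ^ m < (δ : ENNReal) := by
    have : (0 : ENNReal) < δ := by exact_mod_cast hδ
    exact hpow.eventually_lt_const this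
  obtain ⟨m, ⟨hm1, hm2⟩, hm3⟩ := ((hev.and hev2).and (eventually_gt_atTop 0)).exists
  refine ⟨m, hm3, fun i j => ?_⟩
  -- from (‖C^m‖₊)^(1/m) < r conclude ‖C^m‖₊ < r^m
  have hnorm : (‖C ^ m‖₊ : ENNReal) < r ^ m := by
    have hm0 : (m : ℝ) ≠ 0 := Nat.cast_ne_zero.2 hm3.ne'
    calc (‖C ^ m‖₊ : ENNReal) = ((‖C ^ m‖₊ : ENNReal) ^ (1 / (m : ℝ))) ^ (m : ℝ) := by
          rw [← ENNReal.rpow_mul, one_div, inv_mul_cancel₀ hm0, ENNReal.rpow_one]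
      _ < r ^ (m : ℝ) := ENNReal.rpow_lt_rpow hm1 (by positivity)
      _ = r ^ m := ENNReal.rpow_natCast r m
  have hfinal : (‖C ^ m‖₊ : ENNReal) < (δ : ENNReal) := hnorm.trans hm2
  have hle : ‖(C ^ m) i j‖₊ ≤ ‖C ^ m‖₊ := by
    rw [Matrix.linfty_opNNNorm_def]
    calc ‖(C ^ m) i j‖₊ ≤ ∑ j', ‖(C ^ m) i j'‖₊ :=
          Finset.single_le_sum (f := fun j' => ‖(C ^ m) i j'‖₊) (fun _ _ => zero_le) (Finset.mem_univ j)
      _ ≤ Finset.univ.sup (fun i => ∑ j', ‖(C ^ m) i j'‖₊) := Finset.le_sup (f := fun i => ∑ j' : Fin k, ‖(C ^ m) i j'‖₊) (Finset.mem_univ i)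
  have : ‖C ^ m‖₊ < δ := by exact_mod_cast hfinal
  exact hle.trans this.le

lemma ct_spectrum_mem_isRoot {k : ℕ} (M : Matrix (Fin k) (Fin k) ℂ) (μ : ℂ)
    (h : μ ∈ spectrum ℂ M) : M.charpoly.IsRoot μ := by
  rw [spectrum.mem_iff] at h
  rw [Polynomial.IsRoot, ct_eval_charpoly_det]
  by_contra hdet
  apply h
  rw [Algebra.algebraMap_eq_smul_one]
  exact (Matrix.isUnit_iff_isUnit_det _).2 (isUnit_iff_ne_zero.2 hdet)

lemma ct_map_mul_ofReal {k : ℕ} (M N : Matrix (Fin k) (Fin k) ℝ) :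
    (M * N).map Complex.ofReal = M.map Complex.ofReal * N.map Complex.ofReal :=
  Matrix.map_mul (f := Complex.ofRealHom)

lemma ct_map_add_one {k : ℕ} (A : Matrix (Fin k) (Fin k) ℝ) :
    (A + 1).map Complex.ofReal = A.map Complex.ofReal + 1 := by
  ext i j
  by_cases h : i = j <;> simp [Matrix.map_apply, Matrix.one_apply, h, Matrix.add_apply]

lemma ct_cayley_schur {k : ℕ} (A : Matrix (Fin k) (Fin k) ℝ)
    (hA : ∀ μ : ℂ, ((A.map Complex.ofReal).charpoly).IsRoot μ → μ.re < 0)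
    (hu : IsUnit (A - 1).det) (μ : ℂ)
    (hroot : ((((A + 1) * (A - 1)⁻¹).map Complex.ofReal).charpoly).IsRoot μ) :
    ‖μ‖ < 1 := by
  obtain ⟨v, hv, hCv⟩ := (ct_isRoot_charpoly_iff _ μ).1 hroot
  set Ac := A.map Complex.ofReal with hAc
  set Bc := (A - 1)⁻¹.map Complex.ofReal with hBc
  have h1 : (Ac - 1) * Bc = 1 := by
    rw [← ct_map_sub_one, ← ct_map_mul_ofReal, Matrix.mul_nonsing_inv _ hu]
    exact Matrix.map_one _ Complex.ofReal_zero Complex.ofReal_one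
  set w := Bc *ᵥ v with hwdef
  have hw : (Ac - 1) *ᵥ w = v := by
    rw [hwdef, Matrix.mulVec_mulVec, h1, Matrix.one_mulVec]
  have hw0 : w ≠ 0 := by
    intro h0
    apply hv
    rw [← hw, h0, Matrix.mulVec_zero]
  have hCc : ((A + 1) * (A - 1)⁻¹).map Complex.ofReal = (Ac + 1) * Bc := by
    rw [ct_map_mul_ofReal, ct_map_add_one]
  have heq : Ac *ᵥ w + w = μ • (Ac *ᵥ w) - μ • w := by
    have : (Ac + 1) *ᵥ w = μ • ((Ac - 1) *ᵥ w) := by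
      rw [hw, ← hCv, hCc, ← Matrix.mulVec_mulVec, ← hwdef]
    rwa [Matrix.add_mulVec, Matrix.sub_mulVec, Matrix.one_mulVec, smul_sub] at this
  have hμ1 : μ ≠ 1 := by
    intro h
    subst h
    rw [one_smul, one_smul] at heq
    obtain ⟨i, hi⟩ := Function.ne_iff.1 hw0
    simp only [Pi.zero_apply] at hi
    have h := congrFun heq i
    simp only [Pi.add_apply, Pi.sub_apply] at h
    exact hi (by linear_combination h / 2)
  have hμ1' : μ - 1 ≠ 0 := sub_ne_zero.2 hμ1
  have h3 : (μ - 1) • (Ac *ᵥ w) = (μ + 1) • w := by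
    funext i
    have h := congrFun heq i
    simp only [Pi.add_apply, Pi.sub_apply, Pi.smul_apply, smul_eq_mul] at h ⊢
    linear_combination (-1 : ℂ) * h
  set lam := (μ + 1) / (μ - 1) with hlamdef
  have hEig : Ac *ᵥ w = lam • w := by
    funext i
    have h := congrFun h3 i
    simp only [Pi.smul_apply, smul_eq_mul, hlamdef] at h ⊢
    field_simp
    linear_combination h
  have hlam : lam.re < 0 := hA lam ((ct_isRoot_charpoly_iff _ _).2 ⟨w, hw0, hEig⟩)
  have hlam1 : lam - 1 ≠ 0 := by
    intro h
    rw [sub_eq_zero] at h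
    rw [h] at hlam
    norm_num at hlam
  have hprod : lam * (μ - 1) = μ + 1 := by
    rw [hlamdef]; field_simp
  have hμeq : μ = (lam + 1) / (lam - 1) := by
    rw [eq_div_iff hlam1]
    linear_combination hprod
  have habs : ‖lam + 1‖ < ‖lam - 1‖ := by
    rw [Complex.norm_def, Complex.norm_def]
    apply Real.sqrt_lt_sqrt (Complex.normSq_nonneg _)
    simp only [Complex.normSq_apply, Complex.add_re, Complex.sub_re, Complex.one_re,
      Complex.add_im, Complex.sub_im, Complex.one_im]
    nlinarith [hlam]
  calc ‖μ‖ = ‖lam + 1‖ / ‖lam - 1‖ := by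
        rw [hμeq, norm_div]
    _ < 1 := (div_lt_one (norm_pos_iff.2 hlam1)).2 habs


lemma sum_mulVec' {k : ℕ} {ι : Type*} (s : Finset ι) (M : ι → Matrix (Fin k) (Fin k) ℝ)
    (x : Fin k → ℝ) : (∑ j ∈ s, M j) *ᵥ x = ∑ j ∈ s, (M j) *ᵥ x := by
  funext i
  simp only [mulVec, dotProduct, Matrix.sum_apply, Finset.sum_apply, Finset.sum_mul]
  rw [Finset.sum_comm]

lemma dot_sum' {k : ℕ} {ι : Type*} (s : Finset ι) (v : Fin k → ℝ) (w : ι → Fin k → ℝ) :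
    v ⬝ᵥ (∑ j ∈ s, w j) = ∑ j ∈ s, v ⬝ᵥ w j := by
  simp [dotProduct, Finset.sum_apply, Finset.mul_sum]
  rw [Finset.sum_comm]

lemma ct_dot_self_pos {k : ℕ} {v : Fin k → ℝ} (hv : v ≠ 0) : 0 < v ⬝ᵥ v := by
  rcases lt_or_eq_of_le (Finset.sum_nonneg fun i _ => mul_self_nonneg (v i) :
      (0:ℝ) ≤ v ⬝ᵥ v) with h | h
  · exact h
  · exact absurd (dotProduct_self_eq_zero.1 h.symm) hv

lemma ct_qform_bound {k : ℕ} (M : Matrix (Fin k) (Fin k) ℝ) (δ : ℝ) (hδ : 0 ≤ δ)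
    (hM : ∀ i j, |M i j| ≤ δ) (x : Fin k → ℝ) :
    (M *ᵥ x) ⬝ᵥ (M *ᵥ x) ≤ (δ * k)^2 * (x ⬝ᵥ x) := by
  have habs : ∀ i, |(M *ᵥ x) i| ≤ δ * ∑ j, |x j| := by
    intro i
    calc |(M *ᵥ x) i| ≤ ∑ j, |M i j * x j| := by
            rw [show (M *ᵥ x) i = ∑ j, M i j * x j from rfl]
            exact Finset.abs_sum_le_sum_abs _ _
      _ ≤ ∑ j, δ * |x j| := Finset.sum_le_sum fun j _ => by
            rw [abs_mul]; exact mul_le_mul_of_nonneg_right (hM i j) (abs_nonneg _)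
      _ = δ * ∑ j, |x j| := by rw [Finset.mul_sum]
  have hsq : (∑ j, |x j|)^2 ≤ k * (x ⬝ᵥ x) := by
    have := sq_sum_le_card_mul_sum_sq (s := Finset.univ) (f := fun j => |x j|)
    simpa [dotProduct, sq_abs, Finset.card_univ, pow_two, abs_mul_abs_self] using this
  calc (M *ᵥ x) ⬝ᵥ (M *ᵥ x) = ∑ i, ((M *ᵥ x) i)^2 := by simp [dotProduct, pow_two]
    _ ≤ ∑ i : Fin k, (δ * ∑ j, |x j|)^2 := Finset.sum_le_sum fun i _ => by
        rw [← sq_abs]; exact pow_le_pow_left₀ (abs_nonneg _) (habs i) 2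
    _ = k * (δ^2 * (∑ j, |x j|)^2) := by rw [Finset.sum_const, Finset.card_univ]; simp [mul_pow]
    _ ≤ k * (δ^2 * (k * (x ⬝ᵥ x))) := by
        apply mul_le_mul_of_nonneg_left (mul_le_mul_of_nonneg_left hsq (by positivity)) (by positivity)
    _ = (δ * k)^2 * (x ⬝ᵥ x) := by ring

theorem ct_backward_dir {n : ℕ} (A : Matrix (Fin n) (Fin n) ℝ)
    (h : ∃ P : Matrix (Fin n) (Fin n) ℝ, IsPosDefR P ∧ IsNegDefR (Aᵀ * P + P * A)) :
    IsHurwitz A := by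
  obtain ⟨P, ⟨hPs, hPd⟩, ⟨hQs, hQd⟩⟩ := h
  intro μ hroot
  obtain ⟨v, hv, hAv⟩ := (ct_isRoot_charpoly_iff _ μ).1 hroot
  set x : Fin n → ℝ := fun i => (v i).re with hxdef
  set y : Fin n → ℝ := fun i => (v i).im with hydef
  have hS : (star v ⬝ᵥ ((P.map Complex.ofReal) *ᵥ v)).re = x ⬝ᵥ (P *ᵥ x) + y ⬝ᵥ (P *ᵥ y) :=
    ct_re_star_dot P v
  have hT : (star v ⬝ᵥ (((Aᵀ * P + P * A).map Complex.ofReal) *ᵥ v)).re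
      = x ⬝ᵥ ((Aᵀ * P + P * A) *ᵥ x) + y ⬝ᵥ ((Aᵀ * P + P * A) *ᵥ y) :=
    ct_re_star_dot _ v
  have hkey := ct_eig_qform A P μ v hAv
  have hSpos : 0 < (star v ⬝ᵥ ((P.map Complex.ofReal) *ᵥ v)).re := by
    rw [hS]
    rcases ct_re_im_ne_zero hv with hx | hy
    · have := hPd x hx
      have := ct_posdef_nonneg hPd y
      linarith
    · have := hPd y hy
      have := ct_posdef_nonneg hPd x
      linarith
  have hTneg : (star v ⬝ᵥ (((Aᵀ * P + P * A).map Complex.ofReal) *ᵥ v)).re < 0 := by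
    rw [hT]
    rcases ct_re_im_ne_zero hv with hx | hy
    · have := hQd x hx
      have := ct_negdef_nonpos hQd y
      linarith
    · have := hQd y hy
      have := ct_negdef_nonpos hQd x
      linarith
  rw [hkey] at hTneg
  have hconj : (starRingEnd ℂ) μ + μ = ((2 * μ.re : ℝ) : ℂ) := by
    rw [add_comm, Complex.add_conj]
  rw [hconj, Complex.re_ofReal_mul] at hTneg
  nlinarith


theorem ct_forward_dir {n : ℕ} (A : Matrix (Fin n) (Fin n) ℝ)
    (hA : ∀ μ : ℂ, ((A.map Complex.ofReal).charpoly).IsRoot μ → μ.re < 0) :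
    ∃ P : Matrix (Fin n) (Fin n) ℝ,
      (P.IsSymm ∧ ∀ x : Fin n → ℝ, x ≠ 0 → 0 < x ⬝ᵥ (P *ᵥ x)) ∧
      ((Aᵀ * P + P * A).IsSymm ∧ ∀ x : Fin n → ℝ, x ≠ 0 → x ⬝ᵥ ((Aᵀ * P + P * A) *ᵥ x) < 0) := by
  rcases Nat.eq_zero_or_pos n with hn | hn
  · subst hn
    refine ⟨1, ⟨Matrix.isSymm_one, fun x hx => absurd (_root_.funext fun i => i.elim0) hx⟩,
      ?_, fun x hx => absurd (_root_.funext fun i => i.elim0) hx⟩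
    · ext i j; exact i.elim0
  · have hu := ct_hurwitz_unit_sub_one hA
    set C := (A + 1) * (A - 1)⁻¹ with hCdef
    have hspec : ∀ μ ∈ spectrum ℂ (C.map Complex.ofReal), ‖μ‖₊ < 1 := by
      intro μ hμ
      have h2 : ‖μ‖ < 1 := ct_cayley_schur A hA hu μ (ct_spectrum_mem_isRoot _ _ hμ)
      have h3 : ‖μ‖ < 1 := h2
      exact_mod_cast h3
    set δ : NNReal := ((n : NNReal) + 1)⁻¹ with hδdef
    have hδ0 : 0 < δ := by
      rw [hδdef]
      positivity
    obtain ⟨m, hm0, hment⟩ := ct_exists_pow_entries_small hn (C.map Complex.ofReal) hspec δ hδ0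
    have hCm : (C.map Complex.ofReal) ^ m = (C ^ m).map Complex.ofReal := by
      have := map_pow (RingHom.mapMatrix (Complex.ofRealHom) :
        Matrix (Fin n) (Fin n) ℝ →+* Matrix (Fin n) (Fin n) ℂ) C m
      exact this.symm
    have hent : ∀ i j, |(C ^ m) i j| ≤ (δ : ℝ) := by
      intro i j
      have h1 := hment i j
      rw [hCm] at h1
      have h2 : ‖(((C ^ m) i j : ℝ) : ℂ)‖ ≤ (δ : ℝ) := by
        rw [show ((C ^ m).map Complex.ofReal) i j = (((C ^ m) i j : ℝ) : ℂ) from rfl] at h1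
        exact_mod_cast h1
      rwa [Complex.norm_real] at h2
    have hδn : (δ : ℝ) * n < 1 := by
      have hcoe : (δ : ℝ) = ((n : ℝ) + 1)⁻¹ := by
        rw [hδdef]; push_cast; ring
      rw [hcoe, inv_mul_lt_iff₀ (by positivity)]
      linarith
    have hδnn : (0:ℝ) ≤ (δ : ℝ) := δ.coe_nonneg
    set P : Matrix (Fin n) (Fin n) ℝ := ∑ j ∈ Finset.range m, (Cᵀ)^j * C^j with hPdef
    have hPform : ∀ x : Fin n → ℝ,
        x ⬝ᵥ (P *ᵥ x) = ∑ j ∈ Finset.range m, (C^j *ᵥ x) ⬝ᵥ (C^j *ᵥ x) := by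
      intro x
      rw [hPdef, sum_mulVec', dot_sum']
      refine Finset.sum_congr rfl fun j _ => ?_
      rw [← Matrix.transpose_pow, ← Matrix.mulVec_mulVec, Matrix.dotProduct_mulVec,
        Matrix.vecMul_transpose]
    have hPsymm : P.IsSymm := by
      rw [Matrix.IsSymm, hPdef, Matrix.transpose_sum]
      refine Finset.sum_congr rfl fun j _ => ?_
      simp [Matrix.transpose_mul, Matrix.transpose_pow, Matrix.transpose_transpose]
    have hPpos : ∀ x : Fin n → ℝ, x ≠ 0 → 0 < x ⬝ᵥ (P *ᵥ x) := by
      intro x hx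
      rw [hPform]
      have h0 : (C^0 *ᵥ x) ⬝ᵥ (C^0 *ᵥ x) = x ⬝ᵥ x := by rw [pow_zero, Matrix.one_mulVec]
      calc (0:ℝ) < x ⬝ᵥ x := ct_dot_self_pos hx
        _ = (C^0 *ᵥ x) ⬝ᵥ (C^0 *ᵥ x) := h0.symm
        _ ≤ _ := Finset.single_le_sum
            (f := fun j => (C^j *ᵥ x) ⬝ᵥ (C^j *ᵥ x))
            (fun j _ => by
              by_cases h : C^j *ᵥ x = 0
              · rw [h]; simp
              · exact (ct_dot_self_pos h).le)
            (Finset.mem_range.2 hm0)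
    have htel : Cᵀ * P * C - P = (Cᵀ)^m * C^m - 1 := by
      have hterm : ∀ j : ℕ, Cᵀ * ((Cᵀ)^j * C^j) * C = (Cᵀ)^(j+1) * C^(j+1) := by
        intro j
        rw [pow_succ' (Cᵀ) j, pow_succ C j]
        simp only [mul_assoc]
      have hmulsum : Cᵀ * P * C = ∑ j ∈ Finset.range m, (Cᵀ)^(j+1) * C^(j+1) := by
        rw [hPdef, Finset.mul_sum, Finset.sum_mul]
        exact Finset.sum_congr rfl fun j _ => hterm j
      have hshift := Finset.sum_range_succ' (fun j => (Cᵀ)^j * C^j) m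
      have hsucc := Finset.sum_range_succ (fun j => (Cᵀ)^j * C^j) m
      rw [hmulsum, hPdef]
      rw [hsucc] at hshift
      -- hshift : ∑_{range m} f j + f m = ∑_{range m} f (j+1) + f 0
      have : ∑ j ∈ Finset.range m, (Cᵀ)^(j+1) * C^(j+1)
          = (∑ j ∈ Finset.range m, (Cᵀ)^j * C^j) + (Cᵀ)^m * C^m - (Cᵀ)^0 * C^0 := by
        exact eq_sub_of_add_eq hshift.symm
      rw [this, pow_zero, pow_zero, one_mul]
      abel
    have hQ'neg : ∀ u : Fin n → ℝ, u ≠ 0 → u ⬝ᵥ ((Cᵀ * P * C - P) *ᵥ u) < 0 := by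
      intro u hu0
      rw [htel, Matrix.sub_mulVec, dotProduct_sub, Matrix.one_mulVec]
      have h1 : u ⬝ᵥ (((Cᵀ)^m * C^m) *ᵥ u) = (C^m *ᵥ u) ⬝ᵥ (C^m *ᵥ u) := by
        rw [← Matrix.transpose_pow, ← Matrix.mulVec_mulVec, Matrix.dotProduct_mulVec,
          Matrix.vecMul_transpose]
      rw [h1]
      have h2 := ct_qform_bound (C^m) (δ:ℝ) hδnn hent u
      have h3 := ct_dot_self_pos hu0
      have hsq1 : ((δ:ℝ) * n)^2 < 1 := by nlinarith [mul_nonneg hδnn (Nat.cast_nonneg (α := ℝ) n)]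
      nlinarith [mul_lt_mul_of_pos_right hsq1 h3]
    -- Cayley transfer
    refine ⟨P, ⟨hPsymm, hPpos⟩, ⟨?_, ?_⟩⟩
    · rw [Matrix.IsSymm, Matrix.transpose_add, Matrix.transpose_mul, Matrix.transpose_mul,
        Matrix.transpose_transpose, hPsymm.eq]
      exact add_comm _ _
    · intro x hx
      set u : Fin n → ℝ := (A - 1) *ᵥ x with hudef
      have hu0 : u ≠ 0 := by
        intro h0
        apply hx
        have : (A - 1)⁻¹ *ᵥ ((A - 1) *ᵥ x) = x := by
          rw [Matrix.mulVec_mulVec, Matrix.nonsing_inv_mul _ hu, Matrix.one_mulVec]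
        rw [← this, ← hudef, h0, Matrix.mulVec_zero]
      have hCu : C *ᵥ u = (A + 1) *ᵥ x := by
        rw [hudef, Matrix.mulVec_mulVec, hCdef, mul_assoc, Matrix.nonsing_inv_mul _ hu, mul_one]
      have hkey : u ⬝ᵥ ((Cᵀ * P * C - P) *ᵥ u) = 2 * (x ⬝ᵥ ((Aᵀ * P + P * A) *ᵥ x)) := by
        rw [Matrix.sub_mulVec, dotProduct_sub]
        have h1 : u ⬝ᵥ ((Cᵀ * P * C) *ᵥ u) = (C *ᵥ u) ⬝ᵥ (P *ᵥ (C *ᵥ u)) := by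
          rw [← Matrix.mulVec_mulVec, ← Matrix.mulVec_mulVec, Matrix.dotProduct_mulVec,
            Matrix.vecMul_transpose]
        rw [h1, hCu, hudef]
        have h2 : x ⬝ᵥ (Aᵀ *ᵥ (P *ᵥ x)) = (A *ᵥ x) ⬝ᵥ (P *ᵥ x) := by
          rw [Matrix.dotProduct_mulVec, Matrix.vecMul_transpose]
        simp only [← Matrix.mulVec_mulVec, Matrix.add_mulVec, Matrix.sub_mulVec,
          Matrix.one_mulVec, Matrix.mulVec_add, Matrix.mulVec_sub, dotProduct_add,
          dotProduct_sub, add_dotProduct, sub_dotProduct]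
        rw [h2]
        ring
      have := hQ'neg u hu0
      rw [hkey] at this
      linarith


end CtLyapunovAux

/-- The CT linear system `ẋ = Ax` is asymptotically stable (A is Hurwitz) iff there is a
symmetric positive definite `P` with `AᵀP + PA` negative definite. -/
theorem ct_lyapunov_lmi {n : ℕ} (A : Matrix (Fin n) (Fin n) ℝ) :
    IsHurwitz A ↔
      ∃ P : Matrix (Fin n) (Fin n) ℝ, IsPosDefR P ∧ IsNegDefR (Aᵀ * P + P * A) := by
  constructor
  · intro hA
    obtain ⟨P, hP1, hP2⟩ := ct_forward_dir A hA
    exact ⟨P, hP1, hP2⟩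
  · exact ct_backward_dir A
end
end

section
/- Let A be a real n×n matrix. The discrete-time linear system x_{t+1} = Ax_t is asymptotically stable (equivalently, A is Schur stable, i.e., every eigenvalue of A over ℂ has modulus strictly less than 1) if and only if there exists a symmetric positive definite matrix P ∈ ℝ^{n×n} such that A P Aᵀ − P is negative definite. -/
open Matrix Filter Topology
open scoped ENNReal NNReal

noncomputable section

namespace DtLyap

open Polynomial

variable {n : ℕ}

lemma eval_charpoly (M : Matrix (Fin n) (Fin n) ℂ) (z : ℂ) :
    M.charpoly.eval z = (Matrix.scalar (Fin n) z - M).det := by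
  rw [Matrix.charpoly, ← Polynomial.coe_evalRingHom, RingHom.map_det]
  congr 1
  ext i j
  by_cases h : i = j
  · subst h
    simp [Matrix.charmatrix_apply_eq, Matrix.scalar_apply, Matrix.sub_apply]
  · simp [Matrix.charmatrix_apply_ne _ _ _ h, Matrix.scalar_apply, Matrix.sub_apply,
      Matrix.diagonal_apply_ne _ h]

lemma mem_spectrum_iff (M : Matrix (Fin n) (Fin n) ℂ) (z : ℂ) :
    z ∈ spectrum ℂ M ↔ M.charpoly.IsRoot z := by
  have halg : (algebraMap ℂ (Matrix (Fin n) (Fin n) ℂ)) z = Matrix.scalar (Fin n) z := by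
    rw [Matrix.algebraMap_eq_diagonal, Matrix.scalar_apply]
    congr 1
  rw [spectrum.mem_iff, Matrix.isUnit_iff_isUnit_det, isUnit_iff_ne_zero, not_not,
    Polynomial.IsRoot.def, eval_charpoly, halg]

section Norm

attribute [local instance] Matrix.linftyOpNormedRing Matrix.linftyOpNormedAlgebra

lemma entry_nnnorm_le (M : Matrix (Fin n) (Fin n) ℂ) (i j : Fin n) : ‖M i j‖₊ ≤ ‖M‖₊ := by
  have h1 : ‖M i j‖₊ = ‖(M *ᵥ Pi.single j 1) i‖₊ := by simp [Matrix.mulVec_single]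
  rw [h1]
  refine le_trans (nnnorm_le_pi_nnnorm _ i) ?_
  refine le_trans (Matrix.linfty_opNNNorm_mulVec _ _) ?_
  simp [Pi.nnnorm_single]

/-- Schur stability gives a geometric bound on the entries of powers. -/
lemma exists_geom_bound (A : Matrix (Fin n) (Fin n) ℝ) (hA : IsSchur A) :
    ∃ c ρ : ℝ, 0 ≤ c ∧ 0 < ρ ∧ ρ < 1 ∧
      ∀ (k : ℕ) (i j : Fin n), |(A ^ k) i j| ≤ c * ρ ^ k := by
  haveI : CompleteSpace (Matrix (Fin n) (Fin n) ℂ) := FiniteDimensional.complete ℂ _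
  set Ac : Matrix (Fin n) (Fin n) ℂ := A.map Complex.ofReal with hAcdef
  have hpow : ∀ k : ℕ, (A ^ k).map Complex.ofReal = Ac ^ k := by
    intro k
    have h := map_pow (Complex.ofRealHom.mapMatrix) A k
    simp only [RingHom.mapMatrix_apply] at h
    exact h
  have hspec : ∀ z ∈ spectrum ℂ Ac, ‖z‖₊ < 1 := by
    intro z hz
    have hr := hA z ((mem_spectrum_iff Ac z).mp hz)
    rw [← NNReal.coe_lt_coe]
    simpa using hr
  have hsr : spectralRadius ℂ Ac < 1 := by
    rcases (spectrum ℂ Ac).eq_empty_or_nonempty with h | h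
    · simp [spectralRadius, h]
    · simpa using spectrum.spectralRadius_lt_of_forall_lt_of_nonempty h hspec
  obtain ⟨ρ, hρ1, hρ2⟩ := ENNReal.lt_iff_exists_nnreal_btwn.mp hsr
  have hρne : ρ ≠ 0 := by
    rintro rfl
    simp at hρ1
  have hρpos : 0 < ρ := pos_iff_ne_zero.mpr hρne
  have hρlt1 : ρ < 1 := by exact_mod_cast hρ2
  have hG := spectrum.pow_nnnorm_pow_one_div_tendsto_nhds_spectralRadius Ac
  obtain ⟨N, hN⟩ := eventually_atTop.mp (hG.eventually_lt_const hρ1)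
  have key : ∀ k : ℕ, N ≤ k → 1 ≤ k → ‖Ac ^ k‖₊ ≤ ρ ^ k := by
    intro k hk h1
    have h := hN k hk
    have hkpos : (0 : ℝ) < (k : ℝ) := by exact_mod_cast h1
    have h2 := ENNReal.rpow_lt_rpow h hkpos
    rw [← ENNReal.rpow_mul, one_div_mul_cancel hkpos.ne', ENNReal.rpow_one] at h2
    have h3 : (‖Ac ^ k‖₊ : ENNReal) < ((ρ ^ k : NNReal) : ENNReal) := by
      rw [ENNReal.coe_pow, ← ENNReal.rpow_natCast (ρ : ENNReal) k]
      exact h2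
    exact_mod_cast h3.le
  set K := max N 1 with hK
  set c0 : NNReal := (Finset.range K).sup (fun k => ‖Ac ^ k‖₊ / ρ ^ k) ⊔ 1 with hc0
  have hcb : ∀ k : ℕ, ‖Ac ^ k‖₊ ≤ c0 * ρ ^ k := by
    intro k
    rcases lt_or_ge k K with hk | hk
    · have h1 : ‖Ac ^ k‖₊ / ρ ^ k ≤ c0 := by
        rw [hc0]
        exact le_trans
          (Finset.le_sup (f := fun k => ‖Ac ^ k‖₊ / ρ ^ k) (Finset.mem_range.mpr hk))
          le_sup_left
      calc ‖Ac ^ k‖₊ = (‖Ac ^ k‖₊ / ρ ^ k) * ρ ^ k := by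
              rw [div_mul_cancel₀ _ (pow_ne_zero k hρne)]
        _ ≤ c0 * ρ ^ k := mul_le_mul_left h1 _
    · calc ‖Ac ^ k‖₊ ≤ ρ ^ k :=
            key k (le_trans (le_max_left _ _) hk) (le_trans (le_max_right _ _) hk)
        _ = 1 * ρ ^ k := (one_mul _).symm
        _ ≤ c0 * ρ ^ k := mul_le_mul_left le_sup_right _
  refine ⟨c0, ρ, c0.coe_nonneg, hρpos, ?_, ?_⟩
  · exact_mod_cast hρlt1
  intro k i j
  have h1 : ‖(A ^ k) i j‖₊ = ‖(Ac ^ k) i j‖₊ := by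
    rw [← hpow k]
    simp [Matrix.map_apply]
  have h2 : ‖(A ^ k) i j‖₊ ≤ c0 * ρ ^ k := by
    rw [h1]
    exact le_trans (entry_nnnorm_le _ i j) (hcb k)
  have h3 : (‖(A ^ k) i j‖₊ : ℝ) ≤ ((c0 * ρ ^ k : NNReal) : ℝ) := by exact_mod_cast h2
  simpa [Real.norm_eq_abs] using h3

end Norm

lemma dot_self_pos {x : Fin n → ℝ} (hx : x ≠ 0) : 0 < x ⬝ᵥ x := by
  have h0 : 0 ≤ x ⬝ᵥ x := Finset.sum_nonneg fun i _ => mul_self_nonneg _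
  rcases h0.lt_or_eq with h | h
  · exact h
  · exact absurd (dotProduct_self_eq_zero.mp h.symm) hx

/-- Real part of the Hermitian quadratic form of a real matrix. -/
lemma re_quad (M : Matrix (Fin n) (Fin n) ℝ) (v : Fin n → ℂ) :
    (star v ⬝ᵥ ((M.map Complex.ofReal) *ᵥ v)).re =
      (fun i => (v i).re) ⬝ᵥ (M *ᵥ fun i => (v i).re) +
        (fun i => (v i).im) ⬝ᵥ (M *ᵥ fun i => (v i).im) := by
  simp only [dotProduct, mulVec, Matrix.map_apply, Pi.star_apply, Finset.mul_sum,
    ← Finset.sum_add_distrib]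
  rw [Complex.re_sum]
  refine Finset.sum_congr rfl fun i _ => ?_
  rw [Complex.re_sum]
  refine Finset.sum_congr rfl fun j _ => ?_
  simp [Complex.mul_re, Complex.mul_im, Complex.conj_re, Complex.conj_im]

/-- The quadratic form of an entrywise `tsum` matrix. -/
lemma dot_tsum (g : ℕ → Matrix (Fin n) (Fin n) ℝ)
    (hs : ∀ i j, Summable fun k => g k i j) (x : Fin n → ℝ) :
    x ⬝ᵥ ((Matrix.of fun i j => ∑' k, g k i j) *ᵥ x) = ∑' k, x ⬝ᵥ (g k *ᵥ x) := by
  have hsum1 : ∀ i j, Summable fun k => x i * (g k i j * x j) := fun i j =>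
    ((hs i j).mul_right (x j)).mul_left (x i)
  have hsum2 : ∀ i : Fin n, Summable fun k => ∑ j, x i * (g k i j * x j) := fun i =>
    summable_sum fun j _ => hsum1 i j
  simp only [dotProduct, mulVec, Matrix.of_apply]
  calc ∑ i, x i * ∑ j, (∑' k, g k i j) * x j
      = ∑ i, ∑ j, ∑' k, x i * (g k i j * x j) := by
        refine Finset.sum_congr rfl fun i _ => ?_
        rw [Finset.mul_sum]
        refine Finset.sum_congr rfl fun j _ => ?_
        rw [← tsum_mul_right, ← tsum_mul_left]
    _ = ∑ i, ∑' k, ∑ j, x i * (g k i j * x j) :=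
        Finset.sum_congr rfl fun i _ => (Summable.tsum_finsetSum fun j _ => hsum1 i j).symm
    _ = ∑' k, ∑ i, ∑ j, x i * (g k i j * x j) := (Summable.tsum_finsetSum fun i _ => hsum2 i).symm
    _ = ∑' k, ∑ i, x i * ∑ j, g k i j * x j := by
        refine tsum_congr fun k => Finset.sum_congr rfl fun i _ => ?_
        rw [Finset.mul_sum]

lemma summable_quad (g : ℕ → Matrix (Fin n) (Fin n) ℝ)
    (hs : ∀ i j, Summable fun k => g k i j) (x : Fin n → ℝ) :
    Summable fun k => x ⬝ᵥ (g k *ᵥ x) := by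
  have hsum1 : ∀ i j, Summable fun k => x i * (g k i j * x j) := fun i j =>
    ((hs i j).mul_right (x j)).mul_left (x i)
  refine (summable_sum fun i (_ : i ∈ Finset.univ) =>
    summable_sum fun j (_ : j ∈ Finset.univ) => hsum1 i j).congr fun k => ?_
  simp [dotProduct, mulVec, Finset.mul_sum]

/-- Entries of a triple product with an entrywise `tsum` matrix in the middle. -/
lemma mul_tsum (g : ℕ → Matrix (Fin n) (Fin n) ℝ)
    (hs : ∀ i j, Summable fun k => g k i j)
    (B C : Matrix (Fin n) (Fin n) ℝ) (i j : Fin n) :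
    (B * (Matrix.of fun i j => ∑' k, g k i j) * C) i j = ∑' k, (B * g k * C) i j := by
  have hsum1 : ∀ l m, Summable fun k => B i l * g k l m * C m j := fun l m =>
    ((hs l m).mul_left (B i l)).mul_right (C m j)
  have hsum2 : ∀ m : Fin n, Summable fun k => ∑ l, B i l * g k l m * C m j := fun m =>
    summable_sum fun l _ => hsum1 l m
  simp only [Matrix.mul_apply, Matrix.of_apply]
  calc ∑ m, (∑ l, B i l * (∑' k, g k l m)) * C m j
      = ∑ m, ∑ l, ∑' k, B i l * g k l m * C m j := by
        refine Finset.sum_congr rfl fun m _ => ?_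
        rw [Finset.sum_mul]
        refine Finset.sum_congr rfl fun l _ => ?_
        rw [← tsum_mul_left, ← tsum_mul_right]
    _ = ∑ m, ∑' k, ∑ l, B i l * g k l m * C m j :=
        Finset.sum_congr rfl fun m _ => (Summable.tsum_finsetSum fun l _ => hsum1 l m).symm
    _ = ∑' k, ∑ m, ∑ l, B i l * g k l m * C m j := (Summable.tsum_finsetSum fun m _ => hsum2 m).symm
    _ = ∑' k, ∑ m, (∑ l, B i l * g k l m) * C m j := by
        refine tsum_congr fun k => Finset.sum_congr rfl fun m _ => ?_
        rw [Finset.sum_mul]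

end DtLyap

/-- The DT linear system `x_{t+1} = A x_t` is asymptotically stable (A is Schur stable) iff
there is a symmetric positive definite `P` with `A P Aᵀ − P` negative definite. -/
theorem dt_lyapunov_lmi {n : ℕ} (A : Matrix (Fin n) (Fin n) ℝ) :
    IsSchur A ↔
      ∃ P : Matrix (Fin n) (Fin n) ℝ, IsPosDefR P ∧ IsNegDefR (A * P * Aᵀ - P) := by
  constructor
  · -- Schur ⇒ Lyapunov certificate
    intro hA
    obtain ⟨c, ρ, hc, hρ0, hρ1, hb⟩ := DtLyap.exists_geom_bound A hA
    set g : ℕ → Matrix (Fin n) (Fin n) ℝ := fun k => A ^ k * (A ^ k)ᵀ with hg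
    have hgentry : ∀ k i j, g k i j = ∑ l, (A ^ k) i l * (A ^ k) j l := by
      intro k i j
      show (A ^ k * (A ^ k)ᵀ) i j = _
      simp only [Matrix.mul_apply, Matrix.transpose_apply]
    have hs : ∀ i j, Summable fun k => g k i j := by
      intro i j
      refine Summable.of_norm_bounded (g := fun k => ((n : ℝ) * (c * c)) * (ρ * ρ) ^ k)
        ((summable_geometric_of_lt_one (by positivity) (by nlinarith)).mul_left _) ?_
      intro k
      rw [Real.norm_eq_abs, hgentry]
      calc |∑ l, (A ^ k) i l * (A ^ k) j l| ≤ ∑ l, |(A ^ k) i l * (A ^ k) j l| :=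
            Finset.abs_sum_le_sum_abs _ _
        _ ≤ ∑ _l : Fin n, (c * ρ ^ k) * (c * ρ ^ k) := by
            refine Finset.sum_le_sum fun l _ => ?_
            rw [abs_mul]
            exact mul_le_mul (hb k i l) (hb k j l) (abs_nonneg _) (by positivity)
        _ = ((n : ℝ) * (c * c)) * (ρ * ρ) ^ k := by
            rw [Finset.sum_const, Finset.card_univ, Fintype.card_fin, nsmul_eq_mul]
            ring
    set P : Matrix (Fin n) (Fin n) ℝ := Matrix.of (fun i j => ∑' k, g k i j) with hP
    have hPsymm : P.IsSymm := by
      ext i j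
      simp only [hP, Matrix.transpose_apply, Matrix.of_apply]
      refine tsum_congr fun k => ?_
      rw [hgentry, hgentry]
      exact Finset.sum_congr rfl fun l _ => mul_comm _ _
    have hquad : ∀ x : Fin n → ℝ, x ⬝ᵥ (P *ᵥ x) = ∑' k, x ⬝ᵥ (g k *ᵥ x) := fun x =>
      DtLyap.dot_tsum g hs x
    have hterm : ∀ (k : ℕ) (x : Fin n → ℝ),
        x ⬝ᵥ (g k *ᵥ x) = ((A ^ k)ᵀ *ᵥ x) ⬝ᵥ ((A ^ k)ᵀ *ᵥ x) := by
      intro k x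
      show x ⬝ᵥ ((A ^ k * (A ^ k)ᵀ) *ᵥ x) = _
      rw [← Matrix.mulVec_mulVec, Matrix.dotProduct_mulVec, Matrix.mulVec_transpose]
    have hg0 : g 0 = 1 := by simp [hg]
    refine ⟨P, ⟨hPsymm, ?_⟩, ?_, ?_⟩
    · -- positive definiteness
      intro x hx
      rw [hquad]
      refine Summable.tsum_pos (DtLyap.summable_quad g hs x) (fun k => ?_) 0 ?_
      · rw [hterm]
        exact Finset.sum_nonneg fun l _ => mul_self_nonneg _
      · rw [hg0]
        simpa [Matrix.one_mulVec] using DtLyap.dot_self_pos hx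
    all_goals
      have hAPA : ∀ k, A * g k * Aᵀ = g (k + 1) := by
        intro k
        show A * (A ^ k * (A ^ k)ᵀ) * Aᵀ = A ^ (k + 1) * (A ^ (k + 1))ᵀ
        rw [pow_succ']
        rw [Matrix.transpose_mul]
        rw [mul_assoc, mul_assoc, mul_assoc]
    all_goals
      have hQ : A * P * Aᵀ - P = -1 := by
        ext i j
        have h1 : (A * P * Aᵀ) i j = ∑' k, (A * g k * Aᵀ) i j :=
          DtLyap.mul_tsum g hs A Aᵀ i j
        have h3 : (A * P * Aᵀ) i j = ∑' k, g (k + 1) i j := by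
          rw [h1]
          exact tsum_congr fun k => by rw [hAPA k]
        have h4 : ∑' k, g k i j = g 0 i j + ∑' k, g (k + 1) i j :=
          Summable.tsum_eq_zero_add (hs i j)
        have h5 : P i j = g 0 i j + (A * P * Aᵀ) i j := by
          rw [h3]
          exact h4
        rw [Matrix.sub_apply, h5, hg0]
        simp [Matrix.neg_apply]
    · -- symmetry of A P Aᵀ − P
      rw [hQ]
      unfold Matrix.IsSymm
      rw [Matrix.transpose_neg, Matrix.transpose_one]
    · -- negative definiteness
      intro x hx
      rw [hQ]
      have : x ⬝ᵥ ((-1 : Matrix (Fin n) (Fin n) ℝ) *ᵥ x) = -(x ⬝ᵥ x) := by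
        rw [Matrix.neg_mulVec, Matrix.one_mulVec, dotProduct_neg]
      rw [this]
      have := DtLyap.dot_self_pos hx
      linarith
  · -- Lyapunov certificate ⇒ Schur
    rintro ⟨P, ⟨hPs, hPpos⟩, hQs, hQneg⟩ μ hroot
    set Ac : Matrix (Fin n) (Fin n) ℂ := A.map Complex.ofReal with hAcdef
    have hdet : (Matrix.scalar (Fin n) μ - Acᵀ).det = 0 := by
      have h1 : (Matrix.scalar (Fin n) μ - Ac).det = 0 := by
        rw [← DtLyap.eval_charpoly]
        exact hroot
      have h2 : (Matrix.scalar (Fin n) μ - Acᵀ) = (Matrix.scalar (Fin n) μ - Ac)ᵀ := by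
        rw [Matrix.transpose_sub]
        congr 1
        rw [Matrix.scalar_apply, Matrix.diagonal_transpose]
      rw [h2, Matrix.det_transpose]
      exact h1
    obtain ⟨v, hv0, hveq⟩ := Matrix.exists_mulVec_eq_zero_iff.mpr hdet
    have heig : Acᵀ *ᵥ v = μ • v := by
      rw [Matrix.sub_mulVec] at hveq
      have hscal : (Matrix.scalar (Fin n) μ) *ᵥ v = μ • v := by
        funext i
        rw [Matrix.scalar_apply, Matrix.mulVec_diagonal]
        simp
      rw [hscal] at hveq
      exact (sub_eq_zero.mp hveq).symm
    have hconj : Acᵀ *ᵥ (star v) = star (Acᵀ *ᵥ v) := by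
      funext i
      simp only [Matrix.mulVec, dotProduct, Matrix.transpose_apply, Matrix.map_apply,
        Pi.star_apply, hAcdef, star_sum, star_mul']
      refine Finset.sum_congr rfl fun l _ => ?_
      rw [Complex.star_def, Complex.conj_ofReal]
    have heig2 : Acᵀ *ᵥ (star v) = (starRingEnd ℂ) μ • star v := by
      rw [hconj, heig, star_smul]
      rfl
    have hkey : ∀ M : Matrix (Fin n) (Fin n) ℝ,
        star v ⬝ᵥ ((A * M * Aᵀ).map Complex.ofReal *ᵥ v)
          = ((Complex.normSq μ : ℝ) : ℂ) * (star v ⬝ᵥ ((M.map Complex.ofReal) *ᵥ v)) := by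
      intro M
      have hmap : (A * M * Aᵀ).map Complex.ofReal = Ac * (M.map Complex.ofReal) * Acᵀ := by
        have h := map_mul Complex.ofRealHom.mapMatrix (A * M) Aᵀ
        have h2 := map_mul Complex.ofRealHom.mapMatrix A M
        simp only [RingHom.mapMatrix_apply] at h h2
        show (A * M * Aᵀ).map ⇑Complex.ofRealHom = _
        rw [h, h2, hAcdef, Matrix.transpose_map]
        rfl
      rw [hmap, ← Matrix.mulVec_mulVec, ← Matrix.mulVec_mulVec, heig, Matrix.mulVec_smul,
        Matrix.mulVec_smul, dotProduct_smul, Matrix.dotProduct_mulVec,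
        ← Matrix.mulVec_transpose, heig2, smul_dotProduct, smul_eq_mul, smul_eq_mul,
        ← mul_assoc, mul_comm μ ((starRingEnd ℂ) μ), Complex.normSq_eq_conj_mul_self]
    have hQmap : star v ⬝ᵥ (((A * P * Aᵀ - P)).map Complex.ofReal *ᵥ v)
        = (((Complex.normSq μ : ℝ) : ℂ) - 1) * (star v ⬝ᵥ ((P.map Complex.ofReal) *ᵥ v)) := by
      have hsub : ((A * P * Aᵀ - P)).map Complex.ofReal
          = (A * P * Aᵀ).map Complex.ofReal - P.map Complex.ofReal := by
        ext i j
        simp [Matrix.map_apply, Matrix.sub_apply]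
      rw [hsub, Matrix.sub_mulVec, dotProduct_sub, hkey P, sub_mul, one_mul]
    have hre := congrArg Complex.re hQmap
    rw [DtLyap.re_quad] at hre
    have hrhs : ((((Complex.normSq μ : ℝ) : ℂ) - 1) * (star v ⬝ᵥ ((P.map Complex.ofReal) *ᵥ v))).re
        = (Complex.normSq μ - 1) * (star v ⬝ᵥ ((P.map Complex.ofReal) *ᵥ v)).re := by
      rw [show (((Complex.normSq μ : ℝ) : ℂ) - 1) = ((Complex.normSq μ - 1 : ℝ) : ℂ) by
        push_cast; ring]
      rw [Complex.re_ofReal_mul]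
    rw [hrhs, DtLyap.re_quad] at hre
    set a : Fin n → ℝ := fun i => (v i).re with ha
    set b : Fin n → ℝ := fun i => (v i).im with hbdef
    have hab : a ≠ 0 ∨ b ≠ 0 := by
      by_contra h
      push_neg at h
      apply hv0
      funext i
      refine Complex.ext ?_ ?_
      · simpa using congrFun h.1 i
      · simpa using congrFun h.2 i
    have hPaux : ∀ y : Fin n → ℝ, 0 ≤ y ⬝ᵥ (P *ᵥ y) := by
      intro y
      by_cases hy : y = 0
      · simp [hy]
      · exact (hPpos y hy).le
    have hQaux : ∀ y : Fin n → ℝ, y ⬝ᵥ ((A * P * Aᵀ - P) *ᵥ y) ≤ 0 := by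
      intro y
      by_cases hy : y = 0
      · simp [hy]
      · exact (hQneg y hy).le
    have hT : 0 < a ⬝ᵥ (P *ᵥ a) + b ⬝ᵥ (P *ᵥ b) := by
      rcases hab with h | h
      · exact add_pos_of_pos_of_nonneg (hPpos a h) (hPaux b)
      · exact add_pos_of_nonneg_of_pos (hPaux a) (hPpos b h)
    have hS : a ⬝ᵥ ((A * P * Aᵀ - P) *ᵥ a) + b ⬝ᵥ ((A * P * Aᵀ - P) *ᵥ b) < 0 := by
      rcases hab with h | h
      · exact add_neg_of_neg_of_nonpos (hQneg a h) (hQaux b)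
      · exact add_neg_of_nonpos_of_neg (hQaux a) (hQneg b h)
    have hlt : Complex.normSq μ < 1 := by nlinarith [hre, hT, hS]
    nlinarith [Complex.sq_norm μ, norm_nonneg μ, hlt]

end
end

section
/- Let A ∈ ℝ^{n×n}, let A^d denote its diagonal part and A^od := A − A^d its off-diagonal part, and set A↑ := A^d + (A^od)⁺ and A↓ := (A^od)⁻, where M⁺ denotes the entrywise maximum max(M,0) and M⁻ := M⁺ − M. Form the 2n×2n block matrix Â := [[A↑, A↓],[A↓, A↑]]. If there exists a vector p ∈ ℝ^{2n} with all entries strictly positive such that Âp < 0 entrywise, then A is Hurwitz, i.e., every eigenvalue of A over ℂ has strictly negative real part. -/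
open Matrix Filter Topology

noncomputable section

/-- LP sufficient condition for Hurwitz stability (CT case): if `Â p < 0` entrywise for some
entrywise positive `p ∈ ℝ^{2n}`, where `Â = [[A↑, A↓],[A↓, A↑]]` with
`A↑ = A^d + (A^od)⁺` and `A↓ = (A^od)⁻`, then `A` is Hurwitz. -/
theorem lp_implies_hurwitz {n : ℕ} (A : Matrix (Fin n) (Fin n) ℝ)
    (Aup Adown : Matrix (Fin n) (Fin n) ℝ)
    (hup : Aup = diagPart A + matPos (A - diagPart A))
    (hdown : Adown = matNeg (A - diagPart A))
    (p : Fin n ⊕ Fin n → ℝ) (hp : ∀ i, 0 < p i)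
    (hlp : ∀ i, (Matrix.fromBlocks Aup Adown Adown Aup *ᵥ p) i < 0) :
    IsHurwitz A := by
  intro μ hroot
  set A' : Matrix (Fin n) (Fin n) ℂ := A.map Complex.ofReal with hA'
  -- extract eigenvector
  have hdet : (Matrix.diagonal (fun _ : Fin n => μ) - A').det = 0 := by
    have h1 : Polynomial.eval μ A'.charpoly = 0 := hroot
    rw [Matrix.charpoly] at h1
    have h2 : (Polynomial.evalRingHom μ).mapMatrix (charmatrix A') =
        Matrix.diagonal (fun _ : Fin n => μ) - A' := by
      ext i j
      simp [charmatrix_apply, Matrix.diagonal_apply, Matrix.sub_apply]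
      by_cases h : i = j <;> simp [h]
    have h3 := RingHom.map_det (Polynomial.evalRingHom μ) (charmatrix A')
    rw [h2] at h3
    rw [← h3]
    exact h1
  obtain ⟨v, hv0, hv⟩ := (Matrix.exists_mulVec_eq_zero_iff).mpr hdet
  have heig' : ∀ i, (A' *ᵥ v) i = μ * v i := by
    intro i
    have h := congrFun hv i
    rw [Matrix.sub_mulVec] at h
    simp only [Pi.sub_apply, Matrix.mulVec_diagonal, Pi.zero_apply] at h
    linear_combination -h
  clear hv
  -- the comparison matrix B and positive vector q
  set B : Matrix (Fin n) (Fin n) ℝ := Aup + Adown with hB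
  set q : Fin n → ℝ := fun i => p (Sum.inl i) + p (Sum.inr i) with hq
  have hqpos : ∀ i, 0 < q i := fun i => add_pos (hp _) (hp _)
  have hBdiag : ∀ i, B i i = A i i := by
    intro i
    simp [hB, hup, hdown, Matrix.add_apply, matPos, matNeg, diagPart, Matrix.sub_apply]
  have hBoff : ∀ i j, i ≠ j → B i j = |A i j| := by
    intro i j hij
    have hod : (A - diagPart A) i j = A i j := by
      simp [diagPart, Matrix.sub_apply, hij]
    have hBij : B i j = max (A i j) 0 + (max (A i j) 0 - A i j) := by
      rw [hB, Matrix.add_apply, hup, hdown]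
      simp only [matPos, matNeg, Matrix.add_apply, Matrix.sub_apply, Matrix.of_apply, hod,
        diagPart]
      rw [if_neg hij]
      ring
    rcases le_total 0 (A i j) with h | h
    · rw [hBij, max_eq_left h, abs_of_nonneg h]; ring
    · rw [hBij, max_eq_right h, abs_of_nonpos h]; ring
  have hBoffnn : ∀ i j, i ≠ j → 0 ≤ B i j := fun i j hij => (hBoff i j hij) ▸ abs_nonneg _
  -- B *ᵥ q < 0
  have hBq : ∀ i, (B *ᵥ q) i < 0 := by
    intro i
    have h1 := hlp (Sum.inl i)
    have h2 := hlp (Sum.inr i)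
    rw [Matrix.fromBlocks_mulVec] at h1 h2
    simp only [Sum.elim_inl, Sum.elim_inr] at h1 h2
    have : (B *ᵥ q) i = ((Aup *ᵥ (p ∘ Sum.inl)) i + (Adown *ᵥ (p ∘ Sum.inr)) i)
        + ((Adown *ᵥ (p ∘ Sum.inl)) i + (Aup *ᵥ (p ∘ Sum.inr)) i) := by
      simp only [Matrix.mulVec, dotProduct, hB, Matrix.add_apply, hq,
        Function.comp_apply]
      rw [← Finset.sum_add_distrib, ← Finset.sum_add_distrib, ← Finset.sum_add_distrib]
      apply Finset.sum_congr rfl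
      intro j _
      ring
    rw [this]
    exact add_neg h1 h2
  -- diagonal entries negative
  have hdiagneg : ∀ i, A i i < 0 := by
    intro i
    have h := hBq i
    rw [Matrix.mulVec, dotProduct] at h
    by_contra hc
    push_neg at hc
    have : (0:ℝ) ≤ ∑ j, B i j * q j := by
      apply Finset.sum_nonneg
      intro j _
      by_cases hij : i = j
      · subst hij; rw [hBdiag]; exact mul_nonneg hc (hqpos i).le
      · exact mul_nonneg (hBoffnn i j hij) (hqpos j).le
    linarith
  -- suppose Re μ ≥ 0
  by_contra hre
  push_neg at hre
  set w : Fin n → ℝ := fun i => ‖v i‖ with hw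
  have hwnn : ∀ i, 0 ≤ w i := fun i => norm_nonneg _
  -- key inequality : 0 ≤ (B *ᵥ w) i
  have hBw : ∀ i, 0 ≤ (B *ᵥ w) i := by
    intro i
    have hev := heig' i
    rw [Matrix.mulVec, dotProduct] at hev
    have hsplit : (μ - (A i i : ℂ)) * v i = ∑ j ∈ Finset.univ.erase i, (A' i j) * v j := by
      rw [← Finset.add_sum_erase _ _ (Finset.mem_univ i)] at hev
      have : A' i i = (A i i : ℂ) := rfl
      rw [this] at hev
      have := hev
      ring_nf
      ring_nf at this
      linear_combination -this
    have habs : ‖(μ - (A i i : ℂ))‖ * w i ≤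
        ∑ j ∈ Finset.univ.erase i, |A i j| * w j := by
      rw [← norm_mul, hsplit]
      refine le_trans (norm_sum_le _ _) ?_
      apply Finset.sum_le_sum
      intro j _
      rw [norm_mul]
      apply mul_le_mul_of_nonneg_right _ (hwnn j)
      simp [hA', Matrix.map_apply]
    have hlb : -(A i i) ≤ ‖μ - (A i i : ℂ)‖ := by
      have h1 : -(A i i) ≤ (μ - (A i i : ℂ)).re := by
        simp [Complex.sub_re]
        linarith
      exact le_trans h1 (Complex.re_le_norm _)
    have h2 : -(A i i) * w i ≤ ∑ j ∈ Finset.univ.erase i, |A i j| * w j :=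
      le_trans (mul_le_mul_of_nonneg_right hlb (hwnn i)) habs
    rw [Matrix.mulVec, dotProduct, ← Finset.add_sum_erase _ _ (Finset.mem_univ i),
      hBdiag]
    have h3 : ∑ j ∈ Finset.univ.erase i, |A i j| * w j
        = ∑ j ∈ Finset.univ.erase i, B i j * w j := by
      apply Finset.sum_congr rfl
      intro j hj
      rw [hBoff i j ((Finset.mem_erase.mp hj).1).symm]
    rw [h3] at h2
    linarith
  -- choose maximizing index
  have hvne : ∃ i, w i ≠ 0 := by
    by_contra hc
    push_neg at hc
    apply hv0
    funext i
    have := hc i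
    simpa [hw, norm_eq_zero] using this
  obtain ⟨i1, hi1⟩ := hvne
  have hne : (Finset.univ : Finset (Fin n)).Nonempty := ⟨i1, Finset.mem_univ i1⟩
  obtain ⟨i0, _, hi0⟩ := Finset.exists_max_image Finset.univ (fun i => w i / q i) hne
  set t : ℝ := w i0 / q i0 with ht
  have hwle : ∀ j, w j ≤ t * q j := by
    intro j
    have := hi0 j (Finset.mem_univ j)
    calc w j = (w j / q j) * q j := (div_mul_cancel₀ (w j) (hqpos j).ne').symm
    _ ≤ t * q j := mul_le_mul_of_nonneg_right this (hqpos j).le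
  have hwi0 : w i0 = t * q i0 := by
    rw [ht, div_mul_cancel₀ (w i0) (hqpos i0).ne']
  have htpos : 0 < t := by
    have h1 : 0 < w i1 := lt_of_le_of_ne (hwnn i1) (Ne.symm hi1)
    have h2 := hwle i1
    nlinarith [hqpos i1]
  -- contradiction
  have hfin : (B *ᵥ w) i0 ≤ t * (B *ᵥ q) i0 := by
    simp only [Matrix.mulVec, dotProduct, Finset.mul_sum]
    apply Finset.sum_le_sum
    intro j _
    by_cases hij : j = i0
    · subst hij; rw [hwi0]; ring_nf; exact le_refl _
    · have : B i0 j * w j ≤ B i0 j * (t * q j) :=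
        mul_le_mul_of_nonneg_left (hwle j) (hBoffnn i0 j (Ne.symm hij))
      linarith
  have := hBw i0
  nlinarith [hBq i0]
end
end

section
/- Let A ∈ ℝ^{n×n}, and set A↑ := A⁺ = max(A,0) entrywise and A↓ := A⁻ = A⁺ − A. Form the 2n×2n block matrix Â := [[A↑, A↓],[A↓, A↑]]. If there exists a vector p ∈ ℝ^{2n} with all entries strictly positive such that Âp < p entrywise, then A is Schur stable, i.e., every eigenvalue of A over ℂ has modulus strictly less than 1. -/
open Matrix Filter Topology

noncomputable section

/-- LP sufficient condition for Schur stability (DT case): if `Â p < p` entrywise for some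
entrywise positive `p ∈ ℝ^{2n}`, where `Â = [[A⁺, A⁻],[A⁻, A⁺]]`, then `A` is Schur stable. -/
theorem lp_implies_schur {n : ℕ} (A : Matrix (Fin n) (Fin n) ℝ)
    (Aup Adown : Matrix (Fin n) (Fin n) ℝ)
    (hup : Aup = matPos A) (hdown : Adown = matNeg A)
    (p : Fin n ⊕ Fin n → ℝ) (hp : ∀ i, 0 < p i)
    (hlp : ∀ i, (Matrix.fromBlocks Aup Adown Adown Aup *ᵥ p) i < p i) :
    IsSchur A := by
  show ∀ μ : ℂ, ((A.map Complex.ofReal).charpoly).IsRoot μ → ‖μ‖ < 1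
  -- define q
  set q : Fin n → ℝ := fun i => p (Sum.inl i) + p (Sum.inr i) with hq
  have hqpos : ∀ i, 0 < q i := fun i => add_pos (hp _) (hp _)
  have habs : ∀ i, ∑ j, |A i j| * q j < q i := by
    intro i
    have h1 := hlp (Sum.inl i)
    have h2 := hlp (Sum.inr i)
    rw [mulVec, dotProduct, Fintype.sum_sum_type] at h1 h2
    simp only [fromBlocks_apply₁₁, fromBlocks_apply₁₂, fromBlocks_apply₂₁,
      fromBlocks_apply₂₂] at h1 h2
    have key : ∀ j, |A i j| = Aup i j + Adown i j := by
      intro j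
      rw [hup, hdown, matNeg, matPos]
      simp only [Matrix.sub_apply, Matrix.of_apply]
      rcases le_or_gt 0 (A i j) with h | h
      · rw [abs_of_nonneg h, max_eq_left h]; ring
      · rw [abs_of_neg h, max_eq_right h.le]; ring
    calc ∑ j, |A i j| * q j = (∑ j, Aup i j * p (Sum.inl j) + ∑ j, Adown i j * p (Sum.inr j))
          + (∑ j, Adown i j * p (Sum.inl j) + ∑ j, Aup i j * p (Sum.inr j)) := by
          simp only [key, ← Finset.sum_add_distrib]
          congr 1; ext j; ring
      _ < p (Sum.inl i) + p (Sum.inr i) := add_lt_add h1 h2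
  intro μ hroot
  -- get eigenvector
  set M := A.map (Complex.ofReal) with hM
  have hdet : ((M.charmatrix).map (Polynomial.eval μ)).det = 0 := by
    have : Polynomial.eval μ M.charpoly = 0 := hroot
    rw [Matrix.charpoly, ← Polynomial.coe_evalRingHom] at this
    exact (RingHom.map_det (Polynomial.evalRingHom μ) M.charmatrix).symm.trans this
  obtain ⟨v, hv0, hv⟩ := Matrix.exists_mulVec_eq_zero_iff.mpr hdet
  have heig : ∀ i, μ * v i = ∑ j, M i j * v j := by
    intro i
    have := congrFun hv i
    rw [mulVec, dotProduct] at this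
    simp only [Matrix.map_apply, Matrix.charmatrix_apply, Matrix.diagonal_apply] at this
    simp only [Polynomial.eval_sub, Polynomial.eval_C, apply_ite (Polynomial.eval μ),
      Polynomial.eval_X, Polynomial.eval_zero, sub_mul, ite_mul, zero_mul,
      Finset.sum_sub_distrib, Finset.sum_ite_eq, Finset.mem_univ, if_true,
      Pi.zero_apply] at this
    exact sub_eq_zero.mp this
  obtain ⟨i₁, hi₁⟩ := Function.ne_iff.mp hv0
  have hne : (Finset.univ : Finset (Fin n)).Nonempty := ⟨i₁, Finset.mem_univ _⟩
  obtain ⟨i₀, -, hmax⟩ := Finset.exists_max_image Finset.univ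
    (fun i => ‖v i‖ / q i) hne
  set c : ℝ := ‖v i₀‖ / q i₀ with hc
  have hcpos : 0 < c := by
    have h1 : 0 < ‖v i₁‖ / q i₁ :=
      div_pos (by simpa using hi₁) (hqpos i₁)
    exact lt_of_lt_of_le h1 (hmax i₁ (Finset.mem_univ _))
  have hvle : ∀ j, ‖v j‖ ≤ c * q j := fun j =>
    (div_le_iff₀ (hqpos j)).mp (hmax j (Finset.mem_univ _))
  have hvi₀ : ‖v i₀‖ = c * q i₀ := by
    rw [hc, div_mul_cancel₀ _ (hqpos i₀).ne']
  have hvi₀pos : 0 < ‖v i₀‖ := by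
    rw [hvi₀]; exact mul_pos hcpos (hqpos i₀)
  have key : ‖μ‖ * ‖v i₀‖ < ‖v i₀‖ := by
    calc ‖μ‖ * ‖v i₀‖ = ‖μ * v i₀‖ := (norm_mul _ _).symm
      _ = ‖∑ j, M i₀ j * v j‖ := by rw [heig]
      _ ≤ ∑ j, ‖M i₀ j * v j‖ := norm_sum_le _ _
      _ = ∑ j, |A i₀ j| * ‖v j‖ := by
          refine Finset.sum_congr rfl fun j _ => ?_
          rw [norm_mul, hM]; simp [Matrix.map_apply]
      _ ≤ ∑ j, |A i₀ j| * (c * q j) :=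
          Finset.sum_le_sum fun j _ => mul_le_mul_of_nonneg_left (hvle j) (abs_nonneg _)
      _ = c * ∑ j, |A i₀ j| * q j := by rw [Finset.mul_sum]; congr 1; ext j; ring
      _ < c * q i₀ := by exact (mul_lt_mul_iff_right₀ hcpos).mpr (habs i₀)
      _ = ‖v i₀‖ := hvi₀.symm
  exact (mul_lt_iff_lt_one_left hvi₀pos).mp key
end
end

section
/- Let A ∈ ℝ^{n×n}, let A^d denote its diagonal part and A^od := A − A^d its off-diagonal part, and set A↑ := A^d + (A^od)⁺ and A↓ := (A^od)⁻, where M⁺ := max(M,0) entrywise and M⁻ := M⁺ − M. If the 2n×2n block matrix Â := [[A↑, A↓],[A↓, A↑]] is Hurwitz (every eigenvalue over ℂ has strictly negative real part), then A is Hurwitz. -/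
open Matrix Filter Topology

noncomputable section

lemma isRoot_charpoly_iff {m : Type*} [Fintype m] [DecidableEq m] (M : Matrix m m ℂ) (μ : ℂ) :
    M.charpoly.IsRoot μ ↔ ∃ v ≠ 0, M.mulVec v = μ • v := by
  have key : Polynomial.eval μ M.charpoly = ((μ • (1 : Matrix m m ℂ)) - M).det := by
    rw [Matrix.charpoly, ← Polynomial.coe_evalRingHom, RingHom.map_det]
    congr 1
    ext i j
    by_cases h : i = j <;>
      simp [Matrix.charmatrix_apply, h, Matrix.one_apply, Matrix.diagonal_apply]
  rw [Polynomial.IsRoot, key, ← Matrix.exists_mulVec_eq_zero_iff]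
  constructor
  · rintro ⟨v, hv, h0⟩
    refine ⟨v, hv, ?_⟩
    rw [Matrix.sub_mulVec, sub_eq_zero, Matrix.smul_mulVec, Matrix.one_mulVec] at h0
    exact h0.symm
  · rintro ⟨v, hv, h0⟩
    refine ⟨v, hv, ?_⟩
    rw [Matrix.sub_mulVec, sub_eq_zero, Matrix.smul_mulVec, Matrix.one_mulVec, h0]

/-- If the block matrix `Â = [[A↑, A↓],[A↓, A↑]]` (with `A↑ = A^d + (A^od)⁺`,
`A↓ = (A^od)⁻`) is Hurwitz, then `A` is Hurwitz. -/
theorem blockHurwitz_implies_hurwitz {n : ℕ} (A : Matrix (Fin n) (Fin n) ℝ)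
    (Aup Adown : Matrix (Fin n) (Fin n) ℝ)
    (hup : Aup = diagPart A + matPos (A - diagPart A))
    (hdown : Adown = matNeg (A - diagPart A))
    (h : IsHurwitz (Matrix.fromBlocks Aup Adown Adown Aup)) :
    IsHurwitz A := by
  intro μ hμ
  rw [isRoot_charpoly_iff] at hμ
  obtain ⟨v, hv, hAv⟩ := hμ
  have hsub : Aup - Adown = A := by
    rw [hup, hdown, matNeg]; abel
  have hsubC : (Aup.map Complex.ofReal) - (Adown.map Complex.ofReal)
      = A.map Complex.ofReal := by
    ext i j
    have := congrFun (congrFun hsub i) j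
    rw [Matrix.sub_apply] at this
    simp [← Complex.ofReal_sub, this]
  apply h μ
  rw [isRoot_charpoly_iff]
  refine ⟨Sum.elim v (-v), ?_, ?_⟩
  · intro hw
    apply hv
    funext i
    exact congrFun hw (Sum.inl i)
  · have hmap : (Matrix.fromBlocks Aup Adown Adown Aup).map Complex.ofReal
        = Matrix.fromBlocks (Aup.map Complex.ofReal) (Adown.map Complex.ofReal)
            (Adown.map Complex.ofReal) (Aup.map Complex.ofReal) := by
      ext (i | i) (j | j) <;> rfl
    rw [hmap, Matrix.fromBlocks_mulVec]
    funext i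
    rcases i with i | i
    · have : ((Aup.map Complex.ofReal) - (Adown.map Complex.ofReal)).mulVec v
          = μ • v := by rw [hsubC, hAv]
      rw [Matrix.sub_mulVec] at this
      have := congrFun this i
      simpa [Matrix.mulVec_neg, sub_eq_add_neg] using this
    · have : ((Aup.map Complex.ofReal) - (Adown.map Complex.ofReal)).mulVec v
          = μ • v := by rw [hsubC, hAv]
      rw [Matrix.sub_mulVec] at this
      have := congrFun this i
      simp [Matrix.mulVec_neg, Pi.sub_apply] at this ⊢
      linear_combination -this
end
end

section
/- Let A ∈ ℝ^{n×n}, and set A↑ := A⁺ = max(A,0) entrywise and A↓ := A⁻ = A⁺ − A. If the 2n×2n block matrix Â := [[A↑, A↓],[A↓, A↑]] is Schur stable (every eigenvalue over ℂ has modulus strictly less than 1), then A is Schur stable. -/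
open Matrix Filter Topology

noncomputable section

lemma det_fromBlocks_symm {n : Type*} [Fintype n] [DecidableEq n] {R : Type*} [CommRing R]
    (M N : Matrix n n R) :
    (Matrix.fromBlocks M N N M).det = (M + N).det * (M - N).det := by
  have hfac : Matrix.fromBlocks M N N M =
      Matrix.fromBlocks 1 0 1 1 * Matrix.fromBlocks (M + N) N 0 (M - N) *
        Matrix.fromBlocks 1 0 (-1) 1 := by
    simp only [Matrix.fromBlocks_multiply]
    congr 1 <;> simp [Matrix.mul_one, Matrix.one_mul, Matrix.mul_neg] <;> abel
  rw [hfac, Matrix.det_mul, Matrix.det_mul, Matrix.det_fromBlocks_zero₁₂,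
    Matrix.det_fromBlocks_zero₁₂, Matrix.det_fromBlocks_zero₂₁]
  simp

lemma charpoly_fromBlocks_symm {n : Type*} [Fintype n] [DecidableEq n] {R : Type*} [CommRing R]
    (B C : Matrix n n R) :
    (Matrix.fromBlocks B C C B).charpoly = (B + C).charpoly * (B - C).charpoly := by
  rw [Matrix.charpoly, Matrix.charmatrix_fromBlocks, det_fromBlocks_symm]
  congr 1
  · rw [Matrix.charpoly]
    congr 1
    ext i j
    by_cases h : i = j <;>
      simp [h, Matrix.charmatrix_apply, Matrix.diagonal_apply, Matrix.map_apply] <;> ring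
  · rw [Matrix.charpoly]
    congr 1
    ext i j
    by_cases h : i = j <;>
      simp [h, Matrix.charmatrix_apply, Matrix.diagonal_apply, Matrix.map_apply] <;> ring

/-- If the block matrix `Â = [[A⁺, A⁻],[A⁻, A⁺]]` is Schur stable, then `A` is Schur stable. -/
theorem blockSchur_implies_schur {n : ℕ} (A : Matrix (Fin n) (Fin n) ℝ)
    (Aup Adown : Matrix (Fin n) (Fin n) ℝ)
    (hup : Aup = matPos A) (hdown : Adown = matNeg A)
    (h : IsSchur (Matrix.fromBlocks Aup Adown Adown Aup)) :
    IsSchur A := by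
  intro μ hμ
  apply h μ
  have hA : Aup - Adown = A := by
    rw [hup, hdown, matNeg]; abel
  have hmap : ((Matrix.fromBlocks Aup Adown Adown Aup).map Complex.ofReal) =
      Matrix.fromBlocks (Aup.map Complex.ofReal) (Adown.map Complex.ofReal)
        (Adown.map Complex.ofReal) (Aup.map Complex.ofReal) := by
    ext (i | i) (j | j) <;> rfl
  rw [hmap, charpoly_fromBlocks_symm]
  have : Aup.map Complex.ofReal - Adown.map Complex.ofReal = A.map Complex.ofReal := by
    rw [← hA]; ext i j; simp [Matrix.map_apply]
  rw [this]
  simp [Polynomial.IsRoot, Polynomial.eval_mul, hμ.eq_zero]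
end
end

section
/- Let M ∈ ℝ^{n×n} be a Metzler matrix (all off-diagonal entries nonnegative). Then M is Hurwitz (every eigenvalue over ℂ has strictly negative real part) if and only if there exists a vector p ∈ ℝ^n with all entries strictly positive such that Mp < 0 entrywise. -/
open Matrix Filter Topology

noncomputable section

section AuxMetzlerHurwitz

open Finset Polynomial
open scoped ENNReal NNReal
attribute [local instance] Matrix.linftyOpNormedRing Matrix.linftyOpNormedAlgebra

lemma charpoly_eval' {n : ℕ} (A : Matrix (Fin n) (Fin n) ℂ) (μ : ℂ) :
    A.charpoly.eval μ = (μ • (1 : Matrix (Fin n) (Fin n) ℂ) - A).det := by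
  rw [Matrix.charpoly, ← Polynomial.coe_evalRingHom, RingHom.map_det]
  congr 1
  ext i j
  rcases eq_or_ne i j with h | h
  · subst h; simp [Matrix.charmatrix_apply_eq]
  · simp [Matrix.charmatrix_apply_ne _ _ _ h, Matrix.one_apply_ne h]

lemma isRoot_charpoly_iff' {n : ℕ} (A : Matrix (Fin n) (Fin n) ℂ) (μ : ℂ) :
    A.charpoly.IsRoot μ ↔ ∃ v, v ≠ 0 ∧ A *ᵥ v = μ • v := by
  rw [Polynomial.IsRoot, charpoly_eval', ← Matrix.exists_mulVec_eq_zero_iff]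
  constructor
  · rintro ⟨v, hv, h0⟩
    refine ⟨v, hv, ?_⟩
    rw [Matrix.sub_mulVec, Matrix.smul_mulVec, Matrix.one_mulVec, sub_eq_zero] at h0
    exact h0.symm
  · rintro ⟨v, hv, h0⟩
    refine ⟨v, hv, ?_⟩
    rw [Matrix.sub_mulVec, Matrix.smul_mulVec, Matrix.one_mulVec, h0, sub_self]

lemma entry_norm_le' {n : ℕ} (A : Matrix (Fin n) (Fin n) ℂ) (i j : Fin n) : ‖A i j‖ ≤ ‖A‖ := by
  have h : ‖A i j‖₊ ≤ ‖A‖₊ := by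
    rw [Matrix.linfty_opNNNorm_def]
    exact le_trans (Finset.single_le_sum (f := fun k => ‖A i k‖₊) (fun k _ => zero_le)
      (mem_univ j)) (Finset.le_sup (f := fun i => ∑ j, ‖A i j‖₊) (mem_univ i))
  exact_mod_cast h

lemma spectrum_isRoot' {n : ℕ} (A : Matrix (Fin n) (Fin n) ℂ) (ν : ℂ) (hν : ν ∈ spectrum ℂ A) :
    A.charpoly.IsRoot ν := by
  rw [spectrum.mem_iff] at hν
  by_contra hroot
  apply hν
  rw [Polynomial.IsRoot, charpoly_eval'] at hroot
  have : IsUnit (ν • (1 : Matrix (Fin n) (Fin n) ℂ) - A) :=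
    (Matrix.isUnit_iff_isUnit_det _).mpr (isUnit_iff_ne_zero.mpr hroot)
  rwa [Algebra.algebraMap_eq_smul_one]

lemma map_pow_ofReal' {n : ℕ} (B : Matrix (Fin n) (Fin n) ℝ) (N : ℕ) :
    (B ^ N).map Complex.ofReal = (B.map Complex.ofReal) ^ N := by
  induction N with
  | zero => ext i j; simp [Matrix.map_apply, Matrix.one_apply, apply_ite Complex.ofReal]
  | succ k ih =>
      rw [pow_succ, pow_succ, ← ih]
      ext i j
      simp [Matrix.map_apply, Matrix.mul_apply]

lemma exists_pos_of_hurwitz' {n : ℕ} (hn : 0 < n) (M : Matrix (Fin n) (Fin n) ℝ)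
    (hMetzler : ∀ i j : Fin n, i ≠ j → 0 ≤ M i j) (hH : IsHurwitz M) :
    ∃ p : Fin n → ℝ, (∀ i, 0 < p i) ∧ ∀ i, (M *ᵥ p) i < 0 := by
  set Mc := M.map Complex.ofReal with hMc
  -- the root set
  set S : Finset ℂ := Mc.charpoly.roots.toFinset with hSdef
  have hchar_ne : Mc.charpoly ≠ 0 := (Matrix.charpoly_monic Mc).ne_zero
  have hS : S.Nonempty := by
    obtain ⟨z, hz⟩ : ∃ z, Mc.charpoly.IsRoot z := by
      apply Complex.exists_root
      rw [Matrix.charpoly_degree_eq_dim]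
      simpa using hn
    exact ⟨z, Multiset.mem_toFinset.mpr ((Polynomial.mem_roots hchar_ne).mpr hz)⟩
  have hSre : ∀ μ ∈ S, μ.re < 0 := by
    intro μ hμ
    exact hH μ ((Polynomial.mem_roots hchar_ne).mp (Multiset.mem_toFinset.mp hμ))
  have hSne0 : ∀ μ ∈ S, Complex.normSq μ ≠ 0 := by
    intro μ hμ
    have := hSre μ hμ
    simp only [ne_eq, Complex.normSq_eq_zero]
    rintro rfl; simp at this
  -- choose the step size h
  set T : Finset ℝ := insert 1 ((S.image fun μ => -μ.re / Complex.normSq μ) ∪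
    (Finset.univ.image fun i : Fin n => 1 / (1 + |M i i|))) with hTdef
  have hTne : T.Nonempty := Finset.insert_nonempty _ _
  set h : ℝ := T.min' hTne with hhdef
  have hTpos : ∀ x ∈ T, 0 < x := by
    intro x hx
    rcases Finset.mem_insert.mp hx with h1 | h1
    · rw [h1]; norm_num
    rcases Finset.mem_union.mp h1 with h2 | h2
    · obtain ⟨μ, hμ, rfl⟩ := Finset.mem_image.mp h2
      have hre := hSre μ hμ
      have := (Complex.normSq_pos (z := μ)).mpr (by rintro rfl; simp at hre)
      exact div_pos (by linarith) this
    · obtain ⟨i, -, rfl⟩ := Finset.mem_image.mp h2; positivity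
  have h_pos : 0 < h := hTpos _ (T.min'_mem hTne)
  have hh1 : ∀ μ ∈ S, h ≤ -μ.re / Complex.normSq μ := by
    intro μ hμ
    exact Finset.min'_le _ _ (Finset.mem_insert_of_mem (Finset.mem_union_left _
      (Finset.mem_image_of_mem _ hμ)))
  have hh2 : ∀ i : Fin n, h ≤ 1 / (1 + |M i i|) := by
    intro i
    exact Finset.min'_le _ _ (Finset.mem_insert_of_mem (Finset.mem_union_right _
      (Finset.mem_image_of_mem _ (mem_univ i))))
  -- the nonnegative matrix B
  set B : Matrix (Fin n) (Fin n) ℝ := 1 + h • M with hBdef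
  have hB0 : ∀ i j, 0 ≤ B i j := by
    intro i j
    have hBij : B i j = (if i = j then (1:ℝ) else 0) + h * M i j := by
      simp [hBdef, Matrix.add_apply, Matrix.smul_apply, Matrix.one_apply, smul_eq_mul]
    rcases eq_or_ne i j with rfl | hne
    · rw [hBij, if_pos rfl]
      have ha : (0:ℝ) ≤ |M i i| := abs_nonneg _
      have h2 : h * (1 + |M i i|) ≤ 1 := (le_div_iff₀ (by positivity)).mp (hh2 i)
      have h3 : h * (-|M i i|) ≤ h * M i i :=
        mul_le_mul_of_nonneg_left (neg_abs_le _) h_pos.le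
      nlinarith
    · rw [hBij, if_neg hne]
      have := hMetzler i j hne
      nlinarith
  set Bc : Matrix (Fin n) (Fin n) ℂ := B.map Complex.ofReal with hBcdef
  have hhC : (h : ℂ) ≠ 0 := by exact_mod_cast h_pos.ne'
  have hBcapp : ∀ i j, Bc i j = (if i = j then (1:ℂ) else 0) + (h:ℂ) * (Mc i j) := by
    intro i j
    simp only [hBcdef, Matrix.map_apply, hBdef, Matrix.add_apply, Matrix.smul_apply,
      Matrix.one_apply, smul_eq_mul, hMc]
    push_cast [apply_ite Complex.ofReal]
    rfl
  have hBcvec : ∀ v : Fin n → ℂ, Bc *ᵥ v = v + (h:ℂ) • (Mc *ᵥ v) := by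
    intro v
    funext i
    simp only [Matrix.mulVec, dotProduct, Pi.add_apply, Pi.smul_apply, smul_eq_mul]
    rw [Finset.mul_sum]
    have hterm : ∀ x : Fin n, Bc i x * v x =
        (if x = i then v x else 0) + (h:ℂ) * (Mc i x * v x) := by
      intro x
      rw [hBcapp]
      rcases eq_or_ne i x with rfl | hne
      · simp [mul_comm, mul_assoc]; ring
      · rw [if_neg hne, if_neg (Ne.symm hne)]; ring
    rw [Finset.sum_congr rfl fun x _ => hterm x, Finset.sum_add_distrib,
      Finset.sum_ite_eq' Finset.univ i v, if_pos (mem_univ i)]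
  -- transfer of spectrum
  have hspec : ∀ ν ∈ spectrum ℂ Bc, ∃ μ ∈ S, ν = 1 + (h:ℂ) * μ := by
    intro ν hν
    obtain ⟨v, hv, hBv⟩ := (isRoot_charpoly_iff' Bc ν).mp (spectrum_isRoot' Bc ν hν)
    set μ₀ : ℂ := (ν - 1) / (h:ℂ) with hμ₀
    have hMv : Mc *ᵥ v = μ₀ • v := by
      funext i
      have h1 := congrFun hBv i
      rw [hBcvec] at h1
      simp only [Pi.add_apply, Pi.smul_apply, smul_eq_mul] at h1 ⊢
      rw [hμ₀]
      field_simp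
      linear_combination h1
    have hroot : Mc.charpoly.IsRoot μ₀ := (isRoot_charpoly_iff' Mc μ₀).mpr ⟨v, hv, hMv⟩
    refine ⟨μ₀, Multiset.mem_toFinset.mpr ((Polynomial.mem_roots hchar_ne).mpr hroot), ?_⟩
    rw [hμ₀]
    field_simp
    ring
  -- the radius bound
  set r : ℝ := S.sup' hS (fun μ => ‖1 + (h:ℂ) * μ‖) with hrdef
  obtain ⟨μw, hμw⟩ := id hS
  have hr0 : 0 ≤ r := le_trans (norm_nonneg (1 + (h:ℂ) * μw))
    (Finset.le_sup' (fun μ => ‖1 + (h:ℂ) * μ‖) hμw)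
  have hr1 : r < 1 := by
    rw [hrdef, Finset.sup'_lt_iff]
    intro μ hμ
    have hre := hSre μ hμ
    have hnsq : 0 < Complex.normSq μ := lt_of_le_of_ne (Complex.normSq_nonneg μ)
      (Ne.symm (hSne0 μ hμ))
    have hb : h * Complex.normSq μ ≤ -μ.re := (le_div_iff₀ hnsq).mp (hh1 μ hμ)
    have hsq : ‖1 + (h:ℂ) * μ‖ ^ 2 = 1 + 2 * h * μ.re + h ^ 2 * Complex.normSq μ := by
      rw [← Complex.normSq_eq_norm_sq]
      simp only [Complex.normSq_apply, Complex.add_re, Complex.add_im,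
        Complex.one_re, Complex.one_im, Complex.mul_re, Complex.mul_im,
        Complex.ofReal_re, Complex.ofReal_im]
      ring
    nlinarith [norm_nonneg (1 + (h:ℂ) * μ), sq_nonneg h, h_pos]
  have hsr : spectralRadius ℂ Bc ≤ ENNReal.ofReal r := by
    show (⨆ ν ∈ spectrum ℂ Bc, (‖ν‖₊ : ℝ≥0∞)) ≤ ENNReal.ofReal r
    refine iSup₂_le fun ν hν => ?_
    obtain ⟨μ, hμ, rfl⟩ := hspec ν hν
    rw [← ENNReal.ofReal_coe_nnreal]
    exact ENNReal.ofReal_le_ofReal (Finset.le_sup' (fun μ => ‖1 + (h:ℂ) * μ‖) hμ)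
  -- Gelfand: geometric decay of ‖Bc ^ k‖
  set c : ℝ := (1 + r) / 2 with hcdef
  have hc0 : 0 < c := by rw [hcdef]; linarith
  have hc1 : c < 1 := by rw [hcdef]; linarith
  have hrc : r < c := by rw [hcdef]; linarith
  have hQ : spectralRadius ℂ Bc < ENNReal.ofReal c :=
    lt_of_le_of_lt hsr ((ENNReal.ofReal_lt_ofReal_iff hc0).mpr hrc)
  have hG := spectrum.pow_nnnorm_pow_one_div_tendsto_nhds_spectralRadius Bc
  have hev : ∀ᶠ k : ℕ in atTop, ‖Bc ^ k‖ ≤ c ^ k := by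
    filter_upwards [hG.eventually_lt_const hQ, eventually_ge_atTop 1] with k hk hk1
    have h2 : ((‖Bc ^ k‖₊ : ℝ≥0∞) ^ (1/k : ℝ)) ^ (k:ℝ) ≤ (ENNReal.ofReal c) ^ (k:ℝ) :=
      ENNReal.rpow_le_rpow hk.le (by positivity)
    rw [← ENNReal.rpow_mul, one_div, inv_mul_cancel₀
      (by exact_mod_cast (Nat.pos_of_ne_zero (by omega)).ne' : (k:ℝ) ≠ 0),
      ENNReal.rpow_one, ENNReal.rpow_natCast, ← ENNReal.ofReal_pow hc0.le,
      ← ENNReal.ofReal_coe_nnreal] at h2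
    exact (ENNReal.ofReal_le_ofReal_iff (by positivity)).mp h2
  have hnorm0 : Tendsto (fun k : ℕ => ‖Bc ^ k‖) atTop (𝓝 0) :=
    squeeze_zero' (Eventually.of_forall fun k => norm_nonneg _) hev
      (tendsto_pow_atTop_nhds_zero_of_lt_one hc0.le hc1)
  -- invertibility of -(h • M) = 1 - B
  have hdetMc : Mc.det ≠ 0 := by
    intro hd
    obtain ⟨v, hv, hv0⟩ := Matrix.exists_mulVec_eq_zero_iff.mpr hd
    have : Mc.charpoly.IsRoot 0 := (isRoot_charpoly_iff' Mc 0).mpr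
      ⟨v, hv, by simpa using hv0⟩
    simpa using hH 0 this
  have hdetM : M.det ≠ 0 := by
    intro hd
    apply hdetMc
    have : Mc.det = (M.det : ℂ) := (RingHom.map_det Complex.ofRealHom M).symm
    rw [this, hd, Complex.ofReal_zero]
  set A₀ : Matrix (Fin n) (Fin n) ℝ := (1 : Matrix (Fin n) (Fin n) ℝ) - B with hA₀def
  have hA₀M : A₀ = (-h) • M := by
    rw [hA₀def, hBdef]
    ext i j
    simp [Matrix.sub_apply, Matrix.add_apply, Matrix.smul_apply]
  have hdetA : IsUnit A₀.det := by
    rw [hA₀M, Matrix.det_smul]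
    exact isUnit_iff_ne_zero.mpr (mul_ne_zero (pow_ne_zero _ (by linarith)) hdetM)
  set p : Fin n → ℝ := A₀⁻¹ *ᵥ (fun _ => 1) with hpdef
  have hA₀p : A₀ *ᵥ p = fun _ => 1 := by
    rw [hpdef, Matrix.mulVec_mulVec, Matrix.mul_nonsing_inv _ hdetA, Matrix.one_mulVec]
  have hrec : p = B *ᵥ p + fun _ => (1:ℝ) := by
    have h1 : (1 : Matrix (Fin n) (Fin n) ℝ) *ᵥ p - B *ᵥ p = fun _ => 1 := by
      rw [← Matrix.sub_mulVec, ← hA₀def]; exact hA₀p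
    rw [Matrix.one_mulVec] at h1
    funext i
    have := congrFun h1 i
    simp only [Pi.sub_apply, Pi.add_apply] at this ⊢
    linarith
  have hiter : ∀ N : ℕ, p = (B ^ N) *ᵥ p + ∑ k ∈ Finset.range N, (B ^ k) *ᵥ (fun _ => 1) := by
    intro N
    induction N with
    | zero => simp [Matrix.one_mulVec]
    | succ m ih =>
        calc p = (B ^ m) *ᵥ p + ∑ k ∈ Finset.range m, (B ^ k) *ᵥ (fun _ => 1) := ih
          _ = (B ^ m) *ᵥ (B *ᵥ p + fun _ => (1:ℝ)) +
              ∑ k ∈ Finset.range m, (B ^ k) *ᵥ (fun _ => 1) := by rw [← hrec]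
          _ = _ := by
              rw [Matrix.mulVec_add, Matrix.mulVec_mulVec, ← pow_succ,
                Finset.sum_range_succ]
              abel
  have hpowpos : ∀ (N : ℕ) (i j : Fin n), 0 ≤ (B ^ N) i j := by
    intro N
    induction N with
    | zero => intro i j; rcases eq_or_ne i j with rfl | hne
              · simp
              · simp [Matrix.one_apply_ne hne]
    | succ m ih =>
        intro i j
        rw [pow_succ, Matrix.mul_apply]
        exact Finset.sum_nonneg fun k _ => mul_nonneg (ih i k) (hB0 k j)
  have honev : ∀ (N : ℕ) (i : Fin n), 0 ≤ ((B ^ N) *ᵥ (fun _ => 1)) i := by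
    intro N i
    simp only [Matrix.mulVec, dotProduct, mul_one]
    exact Finset.sum_nonneg fun k _ => hpowpos N i k
  have hSsum : ∀ N : ℕ, 1 ≤ N → ∀ i : Fin n,
      1 ≤ (∑ k ∈ Finset.range N, (B ^ k) *ᵥ (fun _ => 1)) i := by
    intro N hN i
    rw [Finset.sum_apply]
    have h0 : ((B ^ 0) *ᵥ (fun _ => (1:ℝ))) i = 1 := by
      simp [Matrix.one_mulVec]
    calc (1:ℝ) = ((B ^ 0) *ᵥ (fun _ => 1)) i := h0.symm
      _ ≤ _ := Finset.single_le_sum (f := fun k => ((B ^ k) *ᵥ (fun _ => (1:ℝ))) i)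
          (fun k _ => honev k i) (Finset.mem_range.mpr hN)
  have hentry : ∀ (N : ℕ) (i j : Fin n), |(B ^ N) i j| ≤ ‖Bc ^ N‖ := by
    intro N i j
    have h1 : |(B ^ N) i j| = ‖((Bc ^ N) i j)‖ := by
      rw [← map_pow_ofReal', Matrix.map_apply, Complex.norm_real, Real.norm_eq_abs]
    rw [h1]
    exact entry_norm_le' _ i j
  set C : ℝ := ∑ j, |p j| with hCdef
  have hC0 : 0 ≤ C := Finset.sum_nonneg fun j _ => abs_nonneg _
  have hBNp : ∀ (N : ℕ) (i : Fin n), |((B ^ N) *ᵥ p) i| ≤ ‖Bc ^ N‖ * C := by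
    intro N i
    calc |((B ^ N) *ᵥ p) i| = |∑ j, (B ^ N) i j * p j| := by
          simp [Matrix.mulVec, dotProduct]
      _ ≤ ∑ j, |(B ^ N) i j * p j| := Finset.abs_sum_le_sum_abs _ _
      _ ≤ ∑ j, ‖Bc ^ N‖ * |p j| := by
          refine Finset.sum_le_sum fun j _ => ?_
          rw [abs_mul]
          exact mul_le_mul_of_nonneg_right (hentry N i j) (abs_nonneg _)
      _ = ‖Bc ^ N‖ * C := by rw [hCdef, Finset.mul_sum]
  obtain ⟨N, hN1, hNlt⟩ : ∃ N : ℕ, 1 ≤ N ∧ ‖Bc ^ N‖ * C < 1 := by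
    have ht : Tendsto (fun k : ℕ => ‖Bc ^ k‖ * C) atTop (𝓝 0) := by
      simpa using hnorm0.mul_const C
    have := (ht.eventually_lt_const (by norm_num : (0:ℝ) < 1)).and (eventually_ge_atTop 1)
    obtain ⟨N, hN⟩ := this.exists
    exact ⟨N, hN.2, hN.1⟩
  have hp_pos : ∀ i, 0 < p i := by
    intro i
    have h1 := congrFun (hiter N) i
    simp only [Pi.add_apply] at h1
    have h2 := hSsum N hN1 i
    have h3 := hBNp N i
    have h4 : -(‖Bc ^ N‖ * C) ≤ ((B ^ N) *ᵥ p) i := neg_le_of_abs_le (h3)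
    rw [h1]
    linarith
  refine ⟨p, hp_pos, fun i => ?_⟩
  have h1 := congrFun hA₀p i
  rw [hA₀M, Matrix.smul_mulVec] at h1
  have h1' : -h * (M *ᵥ p) i = 1 := by simpa using h1
  by_contra hcon
  push_neg at hcon
  nlinarith [mul_nonneg h_pos.le hcon]

lemma hurwitz_of_pos {n : ℕ} (M : Matrix (Fin n) (Fin n) ℝ)
    (hMetzler : ∀ i j : Fin n, i ≠ j → 0 ≤ M i j)
    (p : Fin n → ℝ) (hp : ∀ i, 0 < p i) (hMp : ∀ i, (M *ᵥ p) i < 0) :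
    IsHurwitz M := by
  intro μ hroot
  obtain ⟨v, hv, heig⟩ := (isRoot_charpoly_iff' _ μ).mp hroot
  obtain ⟨j0, hj0⟩ := Function.ne_iff.mp hv
  obtain ⟨i, -, hi⟩ := Finset.exists_max_image Finset.univ (fun j => ‖v j‖ / p j)
    ⟨j0, mem_univ j0⟩
  set t := ‖v i‖ / p i with ht
  have htpos : 0 < t := lt_of_lt_of_le (div_pos (norm_pos_iff.mpr hj0) (hp j0))
    (hi j0 (mem_univ j0))
  have hvi : ‖v i‖ = t * p i := (div_mul_cancel₀ _ (hp i).ne').symm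
  have hvipos : 0 < ‖v i‖ := by rw [hvi]; exact mul_pos htpos (hp i)
  have hbound : ∀ j, ‖v j‖ ≤ t * p j := fun j =>
    (div_le_iff₀ (hp j)).mp (hi j (mem_univ j))
  -- eigen equation at row i
  have hrow : ∑ j, (M i j : ℂ) * v j = μ * v i := by
    have := congrFun heig i
    simpa [Matrix.mulVec, dotProduct, Matrix.map_apply] using this
  have hsplit : (μ - (M i i : ℂ)) * v i = ∑ j ∈ univ.erase i, (M i j : ℂ) * v j := by
    have := Finset.add_sum_erase univ (fun j => (M i j : ℂ) * v j) (mem_univ i)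
    rw [hrow] at this
    rw [sub_mul]
    linear_combination -this
  have hnorm : ‖μ - (M i i : ℂ)‖ * ‖v i‖ < -(M i i) * ‖v i‖ := by
    calc ‖μ - (M i i : ℂ)‖ * ‖v i‖ = ‖(μ - (M i i : ℂ)) * v i‖ := (norm_mul _ _).symm
      _ = ‖∑ j ∈ univ.erase i, (M i j : ℂ) * v j‖ := by rw [hsplit]
      _ ≤ ∑ j ∈ univ.erase i, ‖(M i j : ℂ) * v j‖ := norm_sum_le _ _
      _ = ∑ j ∈ univ.erase i, M i j * ‖v j‖ := by
          refine Finset.sum_congr rfl fun j hj => ?_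
          rw [norm_mul, Complex.norm_real, Real.norm_eq_abs,
            abs_of_nonneg (hMetzler i j (Finset.ne_of_mem_erase hj).symm)]
      _ ≤ ∑ j ∈ univ.erase i, M i j * (t * p j) := by
          refine Finset.sum_le_sum fun j hj => ?_
          exact mul_le_mul_of_nonneg_left (hbound j)
            (hMetzler i j (Finset.ne_of_mem_erase hj).symm)
      _ = t * ∑ j ∈ univ.erase i, M i j * p j := by
          rw [Finset.mul_sum]; refine Finset.sum_congr rfl fun j _ => by ring
      _ < t * (-(M i i) * p i) := by
          refine mul_lt_mul_of_pos_left ?_ htpos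
          have : ∑ j ∈ univ.erase i, M i j * p j = (M *ᵥ p) i - M i i * p i := by
            have := Finset.add_sum_erase univ (fun j => M i j * p j) (mem_univ i)
            simp only [Matrix.mulVec, dotProduct] at *
            linarith [this]
          rw [this]
          have := hMp i
          nlinarith
      _ = -(M i i) * ‖v i‖ := by rw [hvi]; ring
  have h1 : ‖μ - (M i i : ℂ)‖ < -(M i i) := by
    have := (mul_lt_mul_iff_left₀ hvipos).mp hnorm
    linarith
  have h2 : μ.re - M i i ≤ ‖μ - (M i i : ℂ)‖ := by
    have := Complex.abs_re_le_norm (μ - (M i i : ℂ))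
    simp only [Complex.sub_re, Complex.ofReal_re] at this
    calc μ.re - M i i ≤ |μ.re - M i i| := le_abs_self _
      _ ≤ _ := by simpa using this
  linarith

end AuxMetzlerHurwitz

/-- A Metzler matrix `M` is Hurwitz iff there is an entrywise positive vector `p`
with `M p < 0` entrywise. -/
theorem metzler_hurwitz_iff_lp {n : ℕ} (M : Matrix (Fin n) (Fin n) ℝ)
    (hMetzler : ∀ i j : Fin n, i ≠ j → 0 ≤ M i j) :
    IsHurwitz M ↔ ∃ p : Fin n → ℝ, (∀ i, 0 < p i) ∧ ∀ i, (M *ᵥ p) i < 0 := by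
  constructor
  · intro hH
    rcases Nat.eq_zero_or_pos n with rfl | hn
    · exact ⟨fun _ => 1, fun i => i.elim0, fun i => i.elim0⟩
    · exact exists_pos_of_hurwitz' hn M hMetzler hH
  · rintro ⟨p, hp, hMp⟩
    exact hurwitz_of_pos M hMetzler p hp hMp
end
end

section
/- Let f : ℝ^n → ℝ^n be differentiable with fixed point x_e (f(x_e) = x_e), let A ∈ ℝ^{n×n} be the Jacobian matrix of f at x_e, and set A↑ := A⁺ = max(A,0) entrywise, A↓ := A⁻ = A⁺ − A, and Â := [[A↑, A↓],[A↓, A↑]] ∈ ℝ^{2n×2n}. If there exists a vector p ∈ ℝ^{2n} with all entries strictly positive such that Âp < p entrywise, then x_e is an asymptotically stable fixed point of the discrete-time system x_{t+1} = f(x_t); that is, (i) for every ε > 0 there exists δ > 0 such that ‖x_0 − x_e‖ < δ implies ‖f^[k](x_0) − x_e‖ < ε for all k ∈ ℕ, and (ii) there exists δ_a > 0 such that ‖x_0 − x_e‖ < δ_a implies f^[k](x_0) → x_e as k → ∞. -/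
open Matrix Filter Topology

noncomputable section

lemma abs_eq_max_add {a : ℝ} : |a| = max a 0 + (max a 0 - a) := by
  rcases le_total 0 a with h | h
  · rw [abs_of_nonneg h, max_eq_left h]; ring
  · rw [abs_of_nonpos h, max_eq_right h]; ring

lemma dt_aux {n : ℕ} (hn : 0 < n) (f : (Fin n → ℝ) → (Fin n → ℝ)) (x_e : Fin n → ℝ)
    (hfix : f x_e = x_e) (A : Matrix (Fin n) (Fin n) ℝ)
    (hA : HasFDerivAt f (Matrix.mulVecLin A).toContinuousLinearMap x_e)
    (q : Fin n → ℝ) (hq : ∀ i, 0 < q i)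
    (key : ∀ i, (∑ j, |A i j| * q j) < q i) :
    (∀ ε > 0, ∃ δ > 0, ∀ x₀ : Fin n → ℝ, ‖x₀ - x_e‖ < δ →
        ∀ k : ℕ, ‖f^[k] x₀ - x_e‖ < ε) ∧
    (∃ δₐ > 0, ∀ x₀ : Fin n → ℝ, ‖x₀ - x_e‖ < δₐ →
        Tendsto (fun k : ℕ => f^[k] x₀) atTop (𝓝 x_e)) := by
  haveI : NeZero n := ⟨hn.ne'⟩
  have hne : (Finset.univ : Finset (Fin n)).Nonempty := Finset.univ_nonempty
  set N : (Fin n → ℝ) → ℝ := fun x => Finset.univ.sup' hne fun i => |x i| / q i with hNdef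
  have i0 : Fin n := ⟨0, hn⟩
  -- basic properties of N
  have hNle : ∀ (x : Fin n → ℝ) (b : ℝ), (∀ i, |x i| ≤ b * q i) → N x ≤ b := by
    intro x b h
    exact Finset.sup'_le _ _ fun i _ => (div_le_iff₀ (hq i)).2 (h i)
  have hNge : ∀ (x : Fin n → ℝ) (i : Fin n), |x i| ≤ N x * q i := by
    intro x i
    simp only [hNdef]
    exact (div_le_iff₀ (hq i)).1 (Finset.le_sup' (fun i => |x i| / q i) (Finset.mem_univ i))
  have hN0 : ∀ x, 0 ≤ N x := by
    intro x
    have h : (0:ℝ) ≤ |x i0| / q i0 := div_nonneg (abs_nonneg _) (hq i0).le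
    simp only [hNdef]
    exact le_trans h (Finset.le_sup' (fun i => |x i| / q i) (Finset.mem_univ i0))
  have hNadd : ∀ a b, N (a + b) ≤ N a + N b := by
    intro a b
    refine hNle _ _ fun i => ?_
    calc |(a + b) i| ≤ |a i| + |b i| := abs_add_le _ _
      _ ≤ N a * q i + N b * q i := add_le_add (hNge a i) (hNge b i)
      _ = (N a + N b) * q i := by ring
  -- contraction constant
  set c : ℝ := Finset.univ.sup' hne (fun i => (∑ j, |A i j| * q j) / q i) with hcdef
  have hc1 : c < 1 := (Finset.sup'_lt_iff hne).2 fun i _ => (div_lt_one (hq i)).2 (key i)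
  have hc0 : 0 ≤ c := by
    have hs : (0:ℝ) ≤ ∑ j, |A i0 j| * q j :=
      Finset.sum_nonneg fun j _ => mul_nonneg (abs_nonneg _) (hq j).le
    have h : (0:ℝ) ≤ (∑ j, |A i0 j| * q j) / q i0 := div_nonneg hs (hq i0).le
    simp only [hcdef]
    exact le_trans h (Finset.le_sup' (fun i => (∑ j, |A i j| * q j) / q i) (Finset.mem_univ i0))
  have hci : ∀ i, (∑ j, |A i j| * q j) ≤ c * q i := by
    intro i
    simp only [hcdef]
    exact (div_le_iff₀ (hq i)).1
      (Finset.le_sup' (fun i => (∑ j, |A i j| * q j) / q i) (Finset.mem_univ i))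
  have hAc : ∀ x, N (A *ᵥ x) ≤ c * N x := by
    intro x
    refine hNle _ _ fun i => ?_
    calc |(A *ᵥ x) i| = |∑ j, A i j * x j| := by
          simp [Matrix.mulVec, dotProduct]
      _ ≤ ∑ j, |A i j * x j| := Finset.abs_sum_le_sum_abs _ _
      _ = ∑ j, |A i j| * |x j| := by simp [abs_mul]
      _ ≤ ∑ j, |A i j| * (N x * q j) :=
          Finset.sum_le_sum fun j _ => mul_le_mul_of_nonneg_left (hNge x j) (abs_nonneg _)
      _ = (∑ j, |A i j| * q j) * N x := by
          rw [Finset.sum_mul]; exact Finset.sum_congr rfl fun j _ => by ring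
      _ ≤ (c * q i) * N x := mul_le_mul_of_nonneg_right (hci i) (hN0 x)
      _ = (c * N x) * q i := by ring
  -- comparison with the sup norm
  set K1 : ℝ := Finset.univ.sup' hne (fun i => (q i)⁻¹) with hK1def
  set K2 : ℝ := Finset.univ.sup' hne q with hK2def
  have hK1pos : 0 < K1 := by
    simp only [hK1def]
    exact lt_of_lt_of_le (inv_pos.2 (hq i0)) (Finset.le_sup' (fun i => (q i)⁻¹) (Finset.mem_univ i0))
  have hK2pos : 0 < K2 := by
    simp only [hK2def]
    exact lt_of_lt_of_le (hq i0) (Finset.le_sup' q (Finset.mem_univ i0))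
  have hNK1 : ∀ x : Fin n → ℝ, N x ≤ K1 * ‖x‖ := by
    intro x
    refine Finset.sup'_le _ _ fun i _ => ?_
    rw [div_eq_mul_inv]
    have h1 : |x i| ≤ ‖x‖ := by
      have := norm_le_pi_norm x i; rwa [Real.norm_eq_abs] at this
    have h2 : (q i)⁻¹ ≤ K1 := by
      simp only [hK1def]; exact Finset.le_sup' (fun i => (q i)⁻¹) (Finset.mem_univ i)
    calc |x i| * (q i)⁻¹ ≤ ‖x‖ * K1 :=
          mul_le_mul h1 h2 (inv_nonneg.2 (hq i).le) (norm_nonneg _)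
      _ = K1 * ‖x‖ := by ring
  have hK2N : ∀ x : Fin n → ℝ, ‖x‖ ≤ K2 * N x := by
    intro x
    refine (pi_norm_le_iff_of_nonneg (mul_nonneg hK2pos.le (hN0 x))).2 fun i => ?_
    rw [Real.norm_eq_abs]
    calc |x i| ≤ N x * q i := hNge x i
      _ ≤ N x * K2 := by
          have hqK : q i ≤ K2 := by
            simp only [hK2def]; exact Finset.le_sup' q (Finset.mem_univ i)
          exact mul_le_mul_of_nonneg_left hqK (hN0 x)
      _ = K2 * N x := by ring
  -- little-o bound
  set θ : ℝ := (1 + c) / 2 with hθdef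
  have hθ1 : θ < 1 := by rw [hθdef]; linarith
  have hθ0 : 0 ≤ θ := by rw [hθdef]; linarith
  set ε₀ : ℝ := (1 - c) / (2 * K1 * K2) with hε₀def
  have hε₀pos : 0 < ε₀ := div_pos (by linarith) (mul_pos (mul_pos two_pos hK1pos) hK2pos)
  have hlo := hA.isLittleO.def hε₀pos
  rw [Metric.eventually_nhds_iff] at hlo
  obtain ⟨δ₀, hδ₀pos, hδ₀⟩ := hlo
  have hstep : ∀ x : Fin n → ℝ, ‖x - x_e‖ < δ₀ → N (f x - x_e) ≤ θ * N (x - x_e) := by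
    intro x hx
    have hb := hδ₀ (show dist x x_e < δ₀ by rwa [dist_eq_norm])
    rw [hfix] at hb
    simp only [LinearMap.coe_toContinuousLinearMap', Matrix.mulVecLin_apply] at hb
    have hdec : f x - x_e = A *ᵥ (x - x_e) + (f x - x_e - A *ᵥ (x - x_e)) := by abel
    have hr : N (f x - x_e - A *ᵥ (x - x_e)) ≤ K1 * (ε₀ * ‖x - x_e‖) :=
      le_trans (hNK1 _) (mul_le_mul_of_nonneg_left hb hK1pos.le)
    have hr2 : K1 * (ε₀ * ‖x - x_e‖) ≤ K1 * ε₀ * (K2 * N (x - x_e)) := by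
      have h := mul_le_mul_of_nonneg_left (hK2N (x - x_e)) (mul_pos hK1pos hε₀pos).le
      calc K1 * (ε₀ * ‖x - x_e‖) = K1 * ε₀ * ‖x - x_e‖ := by ring
        _ ≤ K1 * ε₀ * (K2 * N (x - x_e)) := h
    have heq : c + K1 * ε₀ * K2 = θ := by
      rw [hε₀def, hθdef]; field_simp; ring
    calc N (f x - x_e) = N (A *ᵥ (x - x_e) + (f x - x_e - A *ᵥ (x - x_e))) := by rw [← hdec]
      _ ≤ N (A *ᵥ (x - x_e)) + N (f x - x_e - A *ᵥ (x - x_e)) := hNadd _ _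
      _ ≤ c * N (x - x_e) + K1 * ε₀ * (K2 * N (x - x_e)) :=
          add_le_add (hAc _) (le_trans hr hr2)
      _ = (c + K1 * ε₀ * K2) * N (x - x_e) := by ring
      _ = θ * N (x - x_e) := by rw [heq]
  set δN : ℝ := δ₀ / K2 with hδNdef
  have hδNpos : 0 < δN := div_pos hδ₀pos hK2pos
  have hinv : ∀ y : Fin n → ℝ, N y < δN → ‖y‖ < δ₀ := by
    intro y hy
    calc ‖y‖ ≤ K2 * N y := hK2N y
      _ < K2 * δN := mul_lt_mul_of_pos_left hy hK2pos
      _ = δ₀ := by rw [hδNdef]; field_simp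
  have hiter : ∀ x₀ : Fin n → ℝ, N (x₀ - x_e) < δN →
      ∀ k : ℕ, N (f^[k] x₀ - x_e) ≤ θ ^ k * N (x₀ - x_e) := by
    intro x₀ h0 k
    induction k with
    | zero => simp
    | succ k ih =>
      have hk1 : θ ^ k * N (x₀ - x_e) ≤ N (x₀ - x_e) := by
        have := pow_le_one₀ hθ0 hθ1.le (n := k)
        nlinarith [hN0 (x₀ - x_e)]
      have hlt : N (f^[k] x₀ - x_e) < δN := lt_of_le_of_lt (le_trans ih hk1) h0
      have hnorm := hinv _ hlt
      rw [Function.iterate_succ_apply']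
      calc N (f (f^[k] x₀) - x_e) ≤ θ * N (f^[k] x₀ - x_e) := hstep _ hnorm
        _ ≤ θ * (θ ^ k * N (x₀ - x_e)) := mul_le_mul_of_nonneg_left ih hθ0
        _ = θ ^ (k + 1) * N (x₀ - x_e) := by ring
  constructor
  · intro ε hε
    refine ⟨min (δN / K1) (ε / (K1 * K2)), lt_min (div_pos hδNpos hK1pos) (div_pos hε (mul_pos hK1pos hK2pos)), fun x₀ hx₀ k => ?_⟩
    have hN₀ : N (x₀ - x_e) ≤ K1 * ‖x₀ - x_e‖ := hNK1 _
    have h1 : N (x₀ - x_e) < δN := by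
      have : K1 * ‖x₀ - x_e‖ < K1 * (δN / K1) :=
        mul_lt_mul_of_pos_left (lt_of_lt_of_le hx₀ (min_le_left _ _)) hK1pos
      rw [mul_div_cancel₀ _ hK1pos.ne'] at this
      linarith
    have h2 : N (x₀ - x_e) < ε / K2 := by
      have : K1 * ‖x₀ - x_e‖ < K1 * (ε / (K1 * K2)) :=
        mul_lt_mul_of_pos_left (lt_of_lt_of_le hx₀ (min_le_right _ _)) hK1pos
      have heq : K1 * (ε / (K1 * K2)) = ε / K2 := by field_simp
      rw [heq] at this
      linarith
    have h3 := hiter x₀ h1 k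
    have hk1 : θ ^ k * N (x₀ - x_e) ≤ N (x₀ - x_e) := by
      have := pow_le_one₀ hθ0 hθ1.le (n := k)
      nlinarith [hN0 (x₀ - x_e)]
    calc ‖f^[k] x₀ - x_e‖ ≤ K2 * N (f^[k] x₀ - x_e) := hK2N _
      _ ≤ K2 * N (x₀ - x_e) := mul_le_mul_of_nonneg_left (le_trans h3 hk1) hK2pos.le
      _ < K2 * (ε / K2) := mul_lt_mul_of_pos_left h2 hK2pos
      _ = ε := by field_simp
  · refine ⟨δN / K1, div_pos hδNpos hK1pos, fun x₀ hx₀ => ?_⟩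
    have h1 : N (x₀ - x_e) < δN := by
      have : K1 * ‖x₀ - x_e‖ < K1 * (δN / K1) := mul_lt_mul_of_pos_left hx₀ hK1pos
      rw [mul_div_cancel₀ _ hK1pos.ne'] at this
      linarith [hNK1 (x₀ - x_e)]
    rw [tendsto_iff_norm_sub_tendsto_zero]
    have hbound : ∀ k : ℕ, ‖f^[k] x₀ - x_e‖ ≤ (K2 * N (x₀ - x_e)) * θ ^ k := by
      intro k
      calc ‖f^[k] x₀ - x_e‖ ≤ K2 * N (f^[k] x₀ - x_e) := hK2N _
        _ ≤ K2 * (θ ^ k * N (x₀ - x_e)) :=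
            mul_le_mul_of_nonneg_left (hiter x₀ h1 k) hK2pos.le
        _ = (K2 * N (x₀ - x_e)) * θ ^ k := by ring
    have htend : Tendsto (fun k : ℕ => (K2 * N (x₀ - x_e)) * θ ^ k) atTop (𝓝 0) := by
      have := (tendsto_pow_atTop_nhds_zero_of_lt_one hθ0 hθ1).const_mul (K2 * N (x₀ - x_e))
      simpa using this
    exact squeeze_zero (fun k => norm_nonneg _) hbound htend

/-- LP-based asymptotic stability test for a fixed point of a DT nonlinear system:
if `f` is differentiable at `x_e` with Jacobian `A`, `f x_e = x_e`, and the LP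
`Â p < p` (with `Â = [[A⁺, A⁻],[A⁻, A⁺]]`) is feasible for some entrywise positive `p`,
then `x_e` is an asymptotically stable fixed point of `x_{t+1} = f(x_t)`. -/
theorem lp_implies_dt_asymptotic_stability {n : ℕ}
    (f : (Fin n → ℝ) → (Fin n → ℝ)) (x_e : Fin n → ℝ)
    (hdiff : Differentiable ℝ f) (hfix : f x_e = x_e)
    (A : Matrix (Fin n) (Fin n) ℝ)
    (hA : HasFDerivAt f (Matrix.mulVecLin A).toContinuousLinearMap x_e)
    (Aup Adown : Matrix (Fin n) (Fin n) ℝ)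
    (hup : Aup = matPos A) (hdown : Adown = matNeg A)
    (p : Fin n ⊕ Fin n → ℝ) (hp : ∀ i, 0 < p i)
    (hlp : ∀ i, (Matrix.fromBlocks Aup Adown Adown Aup *ᵥ p) i < p i) :
    (∀ ε > 0, ∃ δ > 0, ∀ x₀ : Fin n → ℝ, ‖x₀ - x_e‖ < δ →
        ∀ k : ℕ, ‖f^[k] x₀ - x_e‖ < ε) ∧
    (∃ δₐ > 0, ∀ x₀ : Fin n → ℝ, ‖x₀ - x_e‖ < δₐ →
        Tendsto (fun k : ℕ => f^[k] x₀) atTop (𝓝 x_e)) := by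
  rcases Nat.eq_zero_or_pos n with rfl | hn
  · -- trivial case: the state space is a single point
    have hxe : ∀ x : Fin 0 → ℝ, x = x_e := fun x => funext fun i => i.elim0
    have hit : ∀ (x₀ : Fin 0 → ℝ) (k : ℕ), f^[k] x₀ = x_e := by
      intro x₀ k
      rw [hxe x₀, Function.iterate_fixed hfix]
    constructor
    · intro ε hε
      refine ⟨1, one_pos, fun x₀ _ k => ?_⟩
      rw [hit x₀ k, sub_self, norm_zero]
      exact hε
    · refine ⟨1, one_pos, fun x₀ _ => ?_⟩
      simp only [hit x₀]
      exact tendsto_const_nhds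
  · -- main case
    set q : Fin n → ℝ := fun i => p (Sum.inl i) + p (Sum.inr i) with hqdef
    have hq : ∀ i, 0 < q i := fun i => add_pos (hp _) (hp _)
    have habsj : ∀ i j, |A i j| = Aup i j + Adown i j := by
      intro i j
      rw [hup, hdown]
      simp only [matPos, matNeg, Matrix.sub_apply, Matrix.of_apply]
      exact abs_eq_max_add
    have key : ∀ i, (∑ j, |A i j| * q j) < q i := by
      intro i
      have h1 := hlp (Sum.inl i)
      have h2 := hlp (Sum.inr i)
      simp only [Matrix.mulVec, dotProduct, Fintype.sum_sum_type,
        Matrix.fromBlocks_apply₁₁, Matrix.fromBlocks_apply₁₂,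
        Matrix.fromBlocks_apply₂₁, Matrix.fromBlocks_apply₂₂] at h1 h2
      have hsum : (∑ j, |A i j| * q j)
          = (∑ j, Aup i j * p (Sum.inl j) + ∑ j, Adown i j * p (Sum.inr j))
            + (∑ j, Adown i j * p (Sum.inl j) + ∑ j, Aup i j * p (Sum.inr j)) := by
        rw [← Finset.sum_add_distrib, ← Finset.sum_add_distrib, ← Finset.sum_add_distrib]
        refine Finset.sum_congr rfl fun j _ => ?_
        rw [habsj i j, hqdef]
        ring
      rw [hsum, hqdef]
      exact add_lt_add h1 h2
    exact dt_aux hn f x_e hfix A hA q hq key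
end
end

section
/- Let f : ℝ^n → ℝ^n be continuously differentiable with f(x_e) = 0, let A ∈ ℝ^{n×n} be the Jacobian matrix of f at x_e, let A^d denote its diagonal part and A^od := A − A^d, set A↑ := A^d + (A^od)⁺, A↓ := (A^od)⁻, and Â := [[A↑, A↓],[A↓, A↑]] ∈ ℝ^{2n×2n}. If there exists a vector p ∈ ℝ^{2n} with all entries strictly positive such that Âp < 0 entrywise, then x_e is an asymptotically stable equilibrium of ẋ = f(x); that is, (i) for every ε > 0 there exists δ > 0 such that every solution x : [0,∞) → ℝ^n of x'(t) = f(x(t)) with ‖x(0) − x_e‖ < δ satisfies ‖x(t) − x_e‖ < ε for all t ≥ 0, and (ii) there exists δ_a > 0 such that every such solution with ‖x(0) − x_e‖ < δ_a satisfies x(t) → x_e as t → ∞. -/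
open Matrix Filter Topology Finset Set

noncomputable section

private lemma twomax (a : ℝ) : max a 0 + (max a 0 - a) = |a| := by
  rcases le_total a 0 with h | h
  · rw [max_eq_right h, abs_of_nonpos h]; ring
  · rw [max_eq_left h, abs_of_nonneg h]; ring

set_option maxHeartbeats 1600000 in
/-- Core quantitative stability estimate from weighted diagonal dominance. -/
theorem ct_core {n : ℕ}
    (f : (Fin n → ℝ) → (Fin n → ℝ)) (x_e : Fin n → ℝ)
    (heq : f x_e = 0)
    (A : Matrix (Fin n) (Fin n) ℝ)
    (hA : HasFDerivAt f (Matrix.mulVecLin A).toContinuousLinearMap x_e)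
    (q : Fin n → ℝ) (hq : ∀ i, 0 < q i)
    (hrow : ∀ i, A i i * q i + ∑ j ∈ Finset.univ.erase i, |A i j| * q j < 0) :
    ∃ C > (0:ℝ), ∃ c > (0:ℝ), ∃ δ₀ > (0:ℝ), ∀ x : ℝ → (Fin n → ℝ),
      (∀ t ≥ (0:ℝ), HasDerivWithinAt x (f (x t)) (Set.Ici 0) t) →
      ‖x 0 - x_e‖ < δ₀ → ∀ t ≥ (0:ℝ),
        ‖x t - x_e‖ ≤ C * ‖x 0 - x_e‖ * Real.exp (-(c) * t) := by
  rcases isEmpty_or_nonempty (Fin n) with hemp | hne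
  · refine ⟨1, one_pos, 1, one_pos, 1, one_pos, fun x _ _ t ht => ?_⟩
    have h1 : x t - x_e = 0 := Subsingleton.elim _ _
    have h2 : x 0 - x_e = 0 := Subsingleton.elim _ _
    rw [h1, h2, norm_zero]
    simp
  -- weights
  obtain ⟨Qm, hQmpos, hQmle⟩ : ∃ Qm > (0:ℝ), ∀ i, q i ≤ Qm := by
    obtain ⟨i₁, -, hQm⟩ := Finset.exists_max_image Finset.univ q univ_nonempty
    exact ⟨q i₁, hq i₁, fun i => hQm i (mem_univ i)⟩
  obtain ⟨Qi, hQipos, hQile⟩ : ∃ Qi > (0:ℝ), ∀ i, (q i)⁻¹ ≤ Qi := by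
    obtain ⟨i₂, -, hQi⟩ := Finset.exists_max_image Finset.univ (fun i => (q i)⁻¹) univ_nonempty
    exact ⟨(q i₂)⁻¹, inv_pos.2 (hq i₂), fun i => hQi i (mem_univ i)⟩
  -- the constant c
  obtain ⟨c, hcpos, hrowc⟩ : ∃ c > (0:ℝ),
      ∀ i, A i i + (q i)⁻¹ * (∑ j ∈ Finset.univ.erase i, |A i j| * q j) ≤ -c := by
    obtain ⟨i₃, -, hcmax⟩ := Finset.exists_max_image Finset.univ
      (fun i => (A i i * q i + ∑ j ∈ Finset.univ.erase i, |A i j| * q j) / q i) univ_nonempty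
    refine ⟨-((A i₃ i₃ * q i₃ + ∑ j ∈ Finset.univ.erase i₃, |A i₃ j| * q j) / q i₃),
      neg_pos.2 (div_neg_of_neg_of_pos (hrow i₃) (hq i₃)), fun i => ?_⟩
    rw [neg_neg]
    have h4 : ∀ S : ℝ, A i i + (q i)⁻¹ * S = (A i i * q i + S) / q i := by
      intro S
      rw [add_div, mul_div_assoc, div_self (hq i).ne', mul_one, div_eq_inv_mul]
    rw [h4]
    exact hcmax i (mem_univ i)
  -- amax and h₀
  obtain ⟨amax, hamax0, hamaxle⟩ : ∃ amax : ℝ, 0 ≤ amax ∧ ∀ i, |A i i| ≤ amax := by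
    obtain ⟨i₄, -, hamax⟩ := Finset.exists_max_image Finset.univ (fun i => |A i i|) univ_nonempty
    exact ⟨|A i₄ i₄|, abs_nonneg _, fun i => hamax i (mem_univ i)⟩
  obtain ⟨h₀, hh₀pos, hh₀prop⟩ : ∃ h₀ > (0:ℝ),
      ∀ h : ℝ, 0 ≤ h → h ≤ h₀ → h * amax ≤ 1 ∧ h * c ≤ 1 := by
    have hac : (0:ℝ) < 1 + amax + c := by linarith
    refine ⟨(1 + amax + c)⁻¹, inv_pos.2 hac, fun h hh0 hh1 => ?_⟩
    have h2 : h * (1 + amax + c) ≤ 1 := by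
      rw [← le_div_iff₀ hac] at *
      calc h ≤ (1 + amax + c)⁻¹ := hh1
        _ = 1 / (1 + amax + c) := by rw [one_div]
    constructor <;> nlinarith
  -- linearization accuracy ε'
  obtain ⟨ε', hε'pos, hε'key⟩ : ∃ ε' > (0:ℝ), Qi * (ε' * Qm) ≤ c / 4 := by
    have hden : (0:ℝ) < 4 * (Qm * Qi) + 1 := by nlinarith [mul_pos hQmpos hQipos]
    refine ⟨c / (4 * (Qm * Qi) + 1), div_pos hcpos hden, ?_⟩
    have h1 : Qi * (c / (4 * (Qm * Qi) + 1) * Qm) = c * (Qm * Qi) / (4 * (Qm * Qi) + 1) := by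
      ring
    rw [h1, div_le_div_iff₀ hden (by norm_num : (0:ℝ) < 4)]
    nlinarith [mul_pos hQmpos hQipos, hcpos.le]
  have hlo := hA.isLittleO.bound hε'pos
  rw [Metric.eventually_nhds_iff] at hlo
  obtain ⟨rb, hrbpos, hrb⟩ := hlo
  have hRbound : ∀ y : Fin n → ℝ, ‖y - x_e‖ ≤ rb / 2 →
      ‖f y - A *ᵥ (y - x_e)‖ ≤ ε' * ‖y - x_e‖ := by
    intro y hy
    have hd : dist y x_e < rb := by rw [dist_eq_norm]; linarith
    have := hrb hd
    simpa [heq, Matrix.mulVecLin_apply] using this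
  obtain ⟨r', hr'pos, hr'le⟩ : ∃ r' > (0:ℝ), Qm * r' ≤ rb / 2 :=
    ⟨rb / 2 / Qm, div_pos (by linarith) hQmpos,
      le_of_eq (by rw [mul_comm, div_mul_cancel₀ _ hQmpos.ne'])⟩
  obtain ⟨δ₀, hδ₀pos, hδ₀le⟩ : ∃ δ₀ > (0:ℝ), Qi * δ₀ ≤ r' :=
    ⟨r' / Qi, div_pos hr'pos hQipos,
      le_of_eq (by rw [mul_comm, div_mul_cancel₀ _ hQipos.ne'])⟩
  refine ⟨Qm * Qi, mul_pos hQmpos hQipos, c / 2, half_pos hcpos, δ₀, hδ₀pos, fun x hx hx0 => ?_⟩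
  -- the scaled deviation z and its sup-norm g
  set z : ℝ → (Fin n → ℝ) := fun s i => (q i)⁻¹ * (x s i - x_e i) with hzdef
  set g : ℝ → ℝ := fun s => ‖z s‖ with hgdef
  have hg0 : ∀ s, 0 ≤ g s := fun s => norm_nonneg _
  have hzabs : ∀ s i, |z s i| ≤ g s := by
    intro s i
    simpa [Real.norm_eq_abs] using norm_le_pi_norm (z s) i
  have hxz : ∀ s j, x s j - x_e j = q j * z s j := by
    intro s j
    rw [hzdef]
    exact (mul_inv_cancel_left₀ (hq j).ne' _).symm
  have hxg : ∀ s, ‖x s - x_e‖ ≤ Qm * g s := by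
    intro s
    rw [pi_norm_le_iff_of_nonneg (mul_nonneg hQmpos.le (hg0 s))]
    intro i
    have h5 : (x s - x_e) i = q i * z s i := hxz s i
    rw [h5, Real.norm_eq_abs, abs_mul, abs_of_pos (hq i)]
    calc q i * |z s i| ≤ Qm * |z s i| :=
          mul_le_mul_of_nonneg_right (hQmle i) (abs_nonneg _)
      _ ≤ Qm * g s := mul_le_mul_of_nonneg_left (hzabs s i) hQmpos.le
  have hgx : ∀ s, g s ≤ Qi * ‖x s - x_e‖ := by
    intro s
    rw [hgdef, pi_norm_le_iff_of_nonneg (mul_nonneg hQipos.le (norm_nonneg _))]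
    intro i
    rw [hzdef, Real.norm_eq_abs]
    simp only
    rw [abs_mul, abs_of_pos (inv_pos.2 (hq i))]
    have h1 : |x s i - x_e i| ≤ ‖x s - x_e‖ := by
      simpa [Real.norm_eq_abs] using norm_le_pi_norm (x s - x_e) i
    calc (q i)⁻¹ * |x s i - x_e i| ≤ Qi * |x s i - x_e i| :=
          mul_le_mul_of_nonneg_right (hQile i) (abs_nonneg _)
      _ ≤ Qi * ‖x s - x_e‖ := mul_le_mul_of_nonneg_left h1 hQipos.le
  -- derivative of z
  have hzderiv : ∀ t ≥ (0:ℝ),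
      HasDerivWithinAt z (fun i => (q i)⁻¹ * f (x t) i) (Set.Ici 0) t := by
    intro t ht
    apply hasDerivWithinAt_pi.2
    intro i
    exact ((hasDerivWithinAt_pi.1 (hx t ht) i).sub_const (x_e i)).const_mul _
  have hgcont : ContinuousOn g (Set.Ici 0) :=
    fun t ht => ((hzderiv t ht).continuousWithinAt).norm
  have hg0le : g 0 ≤ Qi * ‖x 0 - x_e‖ := hgx 0
  have hδG : Qi * ‖x 0 - x_e‖ < r' :=
    lt_of_lt_of_le (mul_lt_mul_of_pos_left hx0 hQipos) hδ₀le
  -- the Dini derivative estimate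
  have KEY : ∀ t, 0 ≤ t → g t ≤ r' → ∀ rr : ℝ, -(c/2) * g t < rr →
      ∃ᶠ s in 𝓝[>] t, (s - t)⁻¹ * (g s - g t) < rr := by
    intro t ht hgt rr hrr
    set v : Fin n → ℝ := fun i => (q i)⁻¹ * f (x t) i with hvdef
    have hxtr : ‖x t - x_e‖ ≤ rb / 2 := by
      calc ‖x t - x_e‖ ≤ Qm * g t := hxg t
        _ ≤ Qm * r' := mul_le_mul_of_nonneg_left hgt hQmpos.le
        _ ≤ rb / 2 := hr'le
    set R : Fin n → ℝ := f (x t) - A *ᵥ (x t - x_e) with hRdef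
    have hR : ‖R‖ ≤ ε' * (Qm * g t) := by
      calc ‖R‖ ≤ ε' * ‖x t - x_e‖ := hRbound (x t) hxtr
        _ ≤ ε' * (Qm * g t) := mul_le_mul_of_nonneg_left (hxg t) hε'pos.le
    have hRabs : ∀ i, |R i| ≤ ε' * (Qm * g t) := by
      intro i
      calc |R i| ≤ ‖R‖ := by simpa [Real.norm_eq_abs] using norm_le_pi_norm R i
        _ ≤ ε' * (Qm * g t) := hR
    -- step A : growth bound for the Euler step
    have stepA : ∀ h : ℝ, 0 ≤ h → h ≤ h₀ →
        ‖z t + h • v‖ ≤ (1 - 3*c/4*h) * g t := by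
      intro h hh0 hhh
      obtain ⟨hha, hhc⟩ := hh₀prop h hh0 hhh
      have hnn : 0 ≤ (1 - 3*c/4*h) := by nlinarith [hhc]
      rw [pi_norm_le_iff_of_nonneg (mul_nonneg hnn (hg0 t))]
      intro i
      have hfxt : f (x t) i = (∑ j, A i j * (q j * z t j)) + R i := by
        have : (A *ᵥ (x t - x_e)) i = ∑ j, A i j * (q j * z t j) := by
          simp only [Matrix.mulVec, dotProduct]
          exact Finset.sum_congr rfl fun j _ => by rw [Pi.sub_apply, hxz t j]
        rw [hRdef]; simp [this]
      have hsplit : (∑ j, A i j * (q j * z t j))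
          = A i i * (q i * z t i) + ∑ j ∈ Finset.univ.erase i, A i j * (q j * z t j) :=
        (Finset.add_sum_erase _ _ (mem_univ i)).symm
      have hqine : (q i) ≠ 0 := (hq i).ne'
      have expand : (z t + h • v) i
          = (1 + h * A i i) * z t i
            + h * (q i)⁻¹ * (∑ j ∈ Finset.univ.erase i, A i j * (q j * z t j))
            + h * (q i)⁻¹ * R i := by
        simp only [Pi.add_apply, Pi.smul_apply, smul_eq_mul, hvdef]
        rw [hfxt, hsplit]
        field_simp
        ring
      rw [Real.norm_eq_abs, expand]
      have habs3 := abs_add_three ((1 + h * A i i) * z t i)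
        (h * (q i)⁻¹ * (∑ j ∈ Finset.univ.erase i, A i j * (q j * z t j)))
        (h * (q i)⁻¹ * R i)
      have h1pos : 0 ≤ 1 + h * A i i := by
        have := hamaxle i
        have := neg_abs_le (A i i)
        nlinarith
      have e1 : |(1 + h * A i i) * z t i| ≤ (1 + h * A i i) * g t := by
        rw [abs_mul, abs_of_nonneg h1pos]
        exact mul_le_mul_of_nonneg_left (hzabs t i) h1pos
      have hqinn : 0 ≤ h * (q i)⁻¹ := mul_nonneg hh0 (inv_pos.2 (hq i)).le
      have e2 : |h * (q i)⁻¹ * (∑ j ∈ Finset.univ.erase i, A i j * (q j * z t j))|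
          ≤ h * (q i)⁻¹ * ((∑ j ∈ Finset.univ.erase i, |A i j| * q j) * g t) := by
        rw [abs_mul, abs_of_nonneg hqinn]
        refine mul_le_mul_of_nonneg_left ?_ hqinn
        calc |∑ j ∈ Finset.univ.erase i, A i j * (q j * z t j)|
            ≤ ∑ j ∈ Finset.univ.erase i, |A i j * (q j * z t j)| :=
              Finset.abs_sum_le_sum_abs _ _
          _ ≤ ∑ j ∈ Finset.univ.erase i, |A i j| * q j * g t := by
              refine Finset.sum_le_sum fun j _ => ?_
              rw [abs_mul, abs_mul, abs_of_pos (hq j), mul_assoc]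
              exact mul_le_mul_of_nonneg_left
                (mul_le_mul_of_nonneg_left (hzabs t j) (hq j).le) (abs_nonneg _)
          _ = (∑ j ∈ Finset.univ.erase i, |A i j| * q j) * g t := by
              rw [Finset.sum_mul]
      have e3 : |h * (q i)⁻¹ * R i| ≤ h * (q i)⁻¹ * (ε' * (Qm * g t)) := by
        rw [abs_mul, abs_of_nonneg hqinn]
        exact mul_le_mul_of_nonneg_left (hRabs i) hqinn
      -- combine
      have hc1 : A i i + (q i)⁻¹ * (∑ j ∈ Finset.univ.erase i, |A i j| * q j) ≤ -c := hrowc i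
      have hc2 : (q i)⁻¹ * (ε' * Qm) ≤ c / 4 :=
        le_trans (mul_le_mul_of_nonneg_right (hQile i) (mul_nonneg hε'pos.le hQmpos.le)) hε'key
      have hS0 : 0 ≤ ∑ j ∈ Finset.univ.erase i, |A i j| * q j :=
        Finset.sum_nonneg fun j _ => mul_nonneg (abs_nonneg _) (hq j).le
      have hginn : 0 ≤ (q i)⁻¹ := (inv_pos.2 (hq i)).le
      nlinarith [hg0 t, mul_le_mul_of_nonneg_right hc1 (mul_nonneg hh0 (hg0 t)),
        mul_le_mul_of_nonneg_right hc2 (mul_nonneg hh0 (hg0 t))]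
    -- step B : convert to the slope bound
    have hder := hzderiv t ht
    rw [hasDerivWithinAt_iff_isLittleO] at hder
    have hsub : Set.Ioi t ⊆ Set.Ici (0:ℝ) := fun s hs => le_of_lt (lt_of_le_of_lt ht hs)
    have hder' := hder.mono (nhdsWithin_mono t hsub)
    set κ : ℝ := (rr + (c/2) * g t) / 2 with hκdef
    have hκpos : 0 < κ := by rw [hκdef]; linarith
    have hlo2 := hder'.bound hκpos
    have hev1 : ∀ᶠ s in 𝓝[>] t, s - t ≤ h₀ := by
      have h1 : ∀ᶠ s in 𝓝 t, s - t ≤ h₀ := by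
        have h2 : Metric.ball t h₀ ∈ 𝓝 t := Metric.ball_mem_nhds t hh₀pos
        filter_upwards [h2] with s hs
        rw [Metric.mem_ball, Real.dist_eq] at hs
        have := le_abs_self (s - t)
        linarith
      exact h1.filter_mono nhdsWithin_le_nhds
    have hev2 : ∀ᶠ s in 𝓝[>] t, t < s := eventually_mem_nhdsWithin
    have heva : ∀ᶠ s in 𝓝[>] t, (s - t)⁻¹ * (g s - g t) < rr := by
      filter_upwards [hev1, hev2, hlo2] with s hs1 hs2 hs3
      have hh0 : 0 < s - t := by linarith
      have hs3' : ‖z s - z t - (s - t) • v‖ ≤ κ * (s - t) := by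
        have hn : ‖s - t‖ = s - t := by rw [Real.norm_eq_abs, abs_of_pos hh0]
        calc ‖z s - z t - (s - t) • v‖ ≤ κ * ‖s - t‖ := hs3
          _ = κ * (s - t) := by rw [hn]
      have htri : g s ≤ ‖z t + (s - t) • v‖ + ‖z s - z t - (s - t) • v‖ := by
        have hzz : z s = (z t + (s - t) • v) + (z s - z t - (s - t) • v) := by abel
        calc g s = ‖z s‖ := rfl
          _ = ‖(z t + (s - t) • v) + (z s - z t - (s - t) • v)‖ := by rw [← hzz]
          _ ≤ _ := norm_add_le _ _
      have hA' := stepA (s - t) hh0.le hs1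
      have hcomb : g s - g t ≤ (s - t) * (-(3*c/4) * g t + κ) := by nlinarith [hg0 t]
      have hq1 : (s - t)⁻¹ * (g s - g t) ≤ -(3*c/4) * g t + κ := by
        rw [inv_mul_le_iff₀ hh0]
        linarith [hcomb]
      have hlast : -(3*c/4) * g t + κ < rr := by
        rw [hκdef]; nlinarith [hg0 t]
      linarith
    exact heva.frequently
  -- no escape from the region g ≤ r'
  have hnoesc : ∀ s, 0 ≤ s → g s ≤ r' := by
    by_contra hcon
    push_neg at hcon
    obtain ⟨s₀, hs₀0, hs₀⟩ := hcon
    set S : Set ℝ := {s : ℝ | 0 ≤ s ∧ r' < g s} with hSdef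
    have hSne : S.Nonempty := ⟨s₀, hs₀0, hs₀⟩
    have hSbdd : BddBelow S := ⟨0, fun s hs => hs.1⟩
    set T := sInf S with hTdef
    have hT0 : 0 ≤ T := le_csInf hSne fun s hs => hs.1
    have hpre : ∀ s ∈ Set.Ico (0:ℝ) T, g s ≤ r' := by
      intro s hs
      by_contra hgs
      push_neg at hgs
      have hmem : s ∈ S := ⟨hs.1, hgs⟩
      have := csInf_le hSbdd hmem
      rw [← hTdef] at this
      linarith [hs.2]
    have hgT : g T ≤ Qi * ‖x 0 - x_e‖ := by
      have hg1 := le_gronwallBound_of_liminf_deriv_right_le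
        (f := g) (f' := fun s => -(c/2) * g s) (δ := Qi * ‖x 0 - x_e‖)
        (K := -(c/2)) (ε := 0) (a := 0) (b := T)
        (hgcont.mono (Set.Icc_subset_Ici_self))
        (fun s hs rr hrr => KEY s hs.1 (hpre s hs) rr hrr)
        hg0le
        (fun s _ => by simp)
        T (Set.right_mem_Icc.2 hT0)
      rw [sub_zero, gronwallBound_ε0] at hg1
      calc g T ≤ Qi * ‖x 0 - x_e‖ * Real.exp (-(c/2) * T) := hg1
        _ ≤ Qi * ‖x 0 - x_e‖ * 1 := by
            refine mul_le_mul_of_nonneg_left ?_ (mul_nonneg hQipos.le (norm_nonneg _))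
            refine Real.exp_le_one_iff.2 ?_
            nlinarith
        _ = Qi * ‖x 0 - x_e‖ := mul_one _
    have hclos : T ∈ closure S := csInf_mem_closure hSne hSbdd
    haveI hnb : (𝓝[S] T).NeBot := mem_closure_iff_nhdsWithin_neBot.1 hclos
    have hcw : ContinuousWithinAt g S T :=
      (hgcont T hT0).mono (fun s hs => hs.1)
    have hgTge : r' ≤ g T := by
      refine ge_of_tendsto hcw ?_
      filter_upwards [eventually_mem_nhdsWithin] with s hs
      exact (hs.2).le
    linarith
  -- final Gronwall estimate
  intro t ht
  have hg1 := le_gronwallBound_of_liminf_deriv_right_le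
    (f := g) (f' := fun s => -(c/2) * g s) (δ := Qi * ‖x 0 - x_e‖)
    (K := -(c/2)) (ε := 0) (a := 0) (b := t)
    (hgcont.mono Set.Icc_subset_Ici_self)
    (fun s hs rr hrr => KEY s hs.1 (hnoesc s hs.1) rr hrr)
    hg0le (fun s _ => by simp) t (Set.right_mem_Icc.2 ht)
  rw [sub_zero, gronwallBound_ε0] at hg1
  calc ‖x t - x_e‖ ≤ Qm * g t := hxg t
    _ ≤ Qm * (Qi * ‖x 0 - x_e‖ * Real.exp (-(c/2) * t)) :=
        mul_le_mul_of_nonneg_left hg1 hQmpos.le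
    _ = Qm * Qi * ‖x 0 - x_e‖ * Real.exp (-(c/2) * t) := by ring

/-- LP-based asymptotic stability test for an equilibrium of a CT nonlinear system:
if `f` is continuously differentiable, `f x_e = 0`, `A` is the Jacobian of `f` at `x_e`,
and the LP `Â p < 0` (with `Â = [[A↑, A↓],[A↓, A↑]]`, `A↑ = A^d + (A^od)⁺`,
`A↓ = (A^od)⁻`) is feasible for some entrywise positive `p`, then `x_e` is an
asymptotically stable equilibrium of `ẋ = f(x)`. -/
theorem lp_implies_ct_asymptotic_stability {n : ℕ}
    (f : (Fin n → ℝ) → (Fin n → ℝ)) (x_e : Fin n → ℝ)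
    (hdiff : ContDiff ℝ 1 f) (heq : f x_e = 0)
    (A : Matrix (Fin n) (Fin n) ℝ)
    (hA : HasFDerivAt f (Matrix.mulVecLin A).toContinuousLinearMap x_e)
    (Aup Adown : Matrix (Fin n) (Fin n) ℝ)
    (hup : Aup = diagPart A + matPos (A - diagPart A))
    (hdown : Adown = matNeg (A - diagPart A))
    (p : Fin n ⊕ Fin n → ℝ) (hp : ∀ i, 0 < p i)
    (hlp : ∀ i, (Matrix.fromBlocks Aup Adown Adown Aup *ᵥ p) i < 0) :
    (∀ ε > 0, ∃ δ > 0, ∀ x : ℝ → (Fin n → ℝ),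
        (∀ t ≥ (0 : ℝ), HasDerivWithinAt x (f (x t)) (Set.Ici 0) t) →
        ‖x 0 - x_e‖ < δ → ∀ t ≥ (0 : ℝ), ‖x t - x_e‖ < ε) ∧
    (∃ δₐ > 0, ∀ x : ℝ → (Fin n → ℝ),
        (∀ t ≥ (0 : ℝ), HasDerivWithinAt x (f (x t)) (Set.Ici 0) t) →
        ‖x 0 - x_e‖ < δₐ → Tendsto x atTop (𝓝 x_e)) := by
  classical
  set q : Fin n → ℝ := fun j => p (Sum.inl j) + p (Sum.inr j) with hqdef
  have hq : ∀ j, 0 < q j := fun j => add_pos (hp _) (hp _)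
  have hrow : ∀ i, A i i * q i + ∑ j ∈ Finset.univ.erase i, |A i j| * q j < 0 := by
    intro i
    have h1 := hlp (Sum.inl i)
    have h2 := hlp (Sum.inr i)
    have e1 : (Matrix.fromBlocks Aup Adown Adown Aup *ᵥ p) (Sum.inl i)
        = (∑ j, Aup i j * p (Sum.inl j)) + ∑ j, Adown i j * p (Sum.inr j) := by
      simp [Matrix.mulVec, dotProduct, Fintype.sum_sum_type]
    have e2 : (Matrix.fromBlocks Aup Adown Adown Aup *ᵥ p) (Sum.inr i)
        = (∑ j, Adown i j * p (Sum.inl j)) + ∑ j, Aup i j * p (Sum.inr j) := by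
      simp [Matrix.mulVec, dotProduct, Fintype.sum_sum_type]
    rw [e1] at h1
    rw [e2] at h2
    have h3 : ∑ j, (Aup i j + Adown i j) * q j < 0 := by
      have hcomb : ∑ j, (Aup i j + Adown i j) * q j
          = ((∑ j, Aup i j * p (Sum.inl j)) + ∑ j, Adown i j * p (Sum.inr j))
            + ((∑ j, Adown i j * p (Sum.inl j)) + ∑ j, Aup i j * p (Sum.inr j)) := by
        simp only [← Finset.sum_add_distrib]
        refine Finset.sum_congr rfl fun j _ => ?_
        simp only [hqdef]
        ring
      rw [hcomb]
      linarith
    have hentry : ∀ j, Aup i j + Adown i j = if j = i then A i i else |A i j| := by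
      intro j
      by_cases hji : j = i
      · subst hji
        rw [hup, hdown]
        simp [diagPart, matPos, matNeg, Matrix.add_apply, Matrix.sub_apply]
      · have hij : ¬ i = j := fun h => hji h.symm
        rw [hup, hdown]
        simp only [Matrix.add_apply, Matrix.sub_apply, diagPart, matPos, matNeg,
          Matrix.of_apply, if_neg hij, if_neg hji, zero_add, sub_zero]
        exact twomax _
    calc A i i * q i + ∑ j ∈ Finset.univ.erase i, |A i j| * q j
        = ∑ j, (if j = i then A i i else |A i j|) * q j := by
          rw [← Finset.add_sum_erase _ _ (Finset.mem_univ i), if_pos rfl]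
          congr 1
          exact Finset.sum_congr rfl fun j hj => by rw [if_neg (Finset.ne_of_mem_erase hj)]
      _ = ∑ j, (Aup i j + Adown i j) * q j :=
          Finset.sum_congr rfl fun j _ => by rw [hentry j]
      _ < 0 := h3
  obtain ⟨C, hC, c, hc, δ₀, hδ₀, hcore⟩ := ct_core f x_e heq A hA q hq hrow
  constructor
  · intro ε hε
    refine ⟨min δ₀ (ε / (2 * C)), lt_min hδ₀ (by positivity), fun x hsol hx0 t ht => ?_⟩
    have hx0' : ‖x 0 - x_e‖ < δ₀ := lt_of_lt_of_le hx0 (min_le_left _ _)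
    have hb := hcore x hsol hx0' t ht
    have hexp : Real.exp (-c * t) ≤ 1 := Real.exp_le_one_iff.2 (by nlinarith)
    have h2 : ‖x 0 - x_e‖ < ε / (2 * C) := lt_of_lt_of_le hx0 (min_le_right _ _)
    have hhalf : C * (ε / (2 * C)) = ε / 2 := by
      field_simp
    calc ‖x t - x_e‖ ≤ C * ‖x 0 - x_e‖ * Real.exp (-c * t) := hb
      _ ≤ C * ‖x 0 - x_e‖ * 1 :=
          mul_le_mul_of_nonneg_left hexp (mul_nonneg hC.le (norm_nonneg _))
      _ = C * ‖x 0 - x_e‖ := mul_one _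
      _ < C * (ε / (2 * C)) := mul_lt_mul_of_pos_left h2 hC
      _ = ε / 2 := hhalf
      _ < ε := by linarith
  · refine ⟨δ₀, hδ₀, fun x hsol hx0 => ?_⟩
    rw [tendsto_iff_norm_sub_tendsto_zero]
    have hmt : Tendsto (fun t : ℝ => -c * t) atTop atBot :=
      tendsto_id.const_mul_atTop_of_neg (neg_lt_zero.2 hc)
    have hub : Tendsto (fun t : ℝ => C * ‖x 0 - x_e‖ * Real.exp (-c * t)) atTop (𝓝 0) := by
      have h5 := (Real.tendsto_exp_atBot.comp hmt).const_mul (C * ‖x 0 - x_e‖)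
      simpa [Function.comp] using h5
    refine squeeze_zero' (Eventually.of_forall fun t => norm_nonneg _) ?_ hub
    filter_upwards [eventually_ge_atTop (0:ℝ)] with t ht
    exact hcore x hsol hx0 t ht
end
end

section
/- Let A ∈ ℝ^{n×n} be a Metzler matrix (all off-diagonal entries nonnegative), let A^d denote its diagonal part and A^od := A − A^d, and set A↑ := A^d + (A^od)⁺, A↓ := (A^od)⁻, and Â := [[A↑, A↓],[A↓, A↑]] ∈ ℝ^{2n×2n}. Then A is Hurwitz (every eigenvalue over ℂ has strictly negative real part) if and only if there exists a vector p ∈ ℝ^{2n} with all entries strictly positive such that Âp < 0 entrywise; i.e., for Metzler A the LP stability condition is both necessary and sufficient. -/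
open Matrix Filter Topology Polynomial Finset

noncomputable section

lemma eval_charpoly' {n : Type*} [Fintype n] [DecidableEq n] {K : Type*} [CommRing K]
    (M : Matrix n n K) (r : K) :
    M.charpoly.eval r = (r • (1 : Matrix n n K) - M).det := by
  rw [charpoly, ← coe_evalRingHom, RingHom.map_det]
  congr 1
  ext i j
  by_cases h : i = j <;>
    simp [charmatrix_apply, h, Matrix.one_apply, Matrix.diagonal_apply]

lemma exists_eigenvec {n : Type*} [Fintype n] [DecidableEq n] (M : Matrix n n ℂ) (μ : ℂ)
    (h : M.charpoly.IsRoot μ) : ∃ v : n → ℂ, v ≠ 0 ∧ M *ᵥ v = μ • v := by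
  have hdet : (μ • (1 : Matrix n n ℂ) - M).det = 0 := by
    rw [← eval_charpoly']; exact h
  obtain ⟨v, hv0, hv⟩ := (Matrix.exists_mulVec_eq_zero_iff).2 hdet
  refine ⟨v, hv0, ?_⟩
  rw [sub_mulVec, smul_mulVec, one_mulVec, sub_eq_zero] at hv
  exact hv.symm

lemma hurwitz_of_lp {n : ℕ} (A : Matrix (Fin n) (Fin n) ℝ)
    (hM : ∀ i j, i ≠ j → 0 ≤ A i j) (q : Fin n → ℝ) (hq : ∀ i, 0 < q i)
    (hAq : ∀ i, (A *ᵥ q) i < 0) : IsHurwitz A := by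
  intro μ hroot
  obtain ⟨v, hv0, hv⟩ := exists_eigenvec _ μ hroot
  obtain ⟨i0, hi0⟩ := Function.ne_iff.1 hv0
  obtain ⟨k, -, hk⟩ := Finset.exists_max_image Finset.univ
    (fun i => ‖v i‖ / q i) ⟨i0, Finset.mem_univ i0⟩
  have hvk : 0 < ‖v k‖ := by
    have h1 : 0 < ‖v i0‖ / q i0 :=
      div_pos (by simpa using hi0) (hq i0)
    have h2 : 0 < ‖v k‖ / q k := lt_of_lt_of_le h1 (hk i0 (Finset.mem_univ i0))
    have h3 := mul_pos h2 (hq k)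
    rwa [div_mul_cancel₀ _ (hq k).ne'] at h3
  have key : ∀ j, ‖v j‖ * q k ≤ ‖v k‖ * q j := by
    intro j
    have := hk j (Finset.mem_univ j)
    rw [div_le_div_iff₀ (hq j) (hq k)] at this
    linarith
  have hrowk : ∑ j, (A k j : ℂ) * v j = μ * v k := by
    have := congrFun hv k
    simpa [Matrix.mulVec, dotProduct, Matrix.map_apply] using this
  have hsplit : (μ - (A k k : ℂ)) * v k = ∑ j ∈ Finset.univ.erase k, (A k j : ℂ) * v j := by
    have := Finset.sum_erase_add Finset.univ (fun j => (A k j : ℂ) * v j) (Finset.mem_univ k)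
    rw [hrowk] at this
    linear_combination -this
  have h1 : ‖μ - (A k k : ℂ)‖ * ‖v k‖
      ≤ ∑ j ∈ Finset.univ.erase k, A k j * ‖v j‖ := by
    rw [← norm_mul, hsplit]
    refine le_trans (norm_sum_le _ _) (le_of_eq (Finset.sum_congr rfl ?_))
    intro j hj
    have hjk : j ≠ k := Finset.ne_of_mem_erase hj
    rw [norm_mul, Complex.norm_real, Real.norm_eq_abs, abs_of_nonneg (hM k j (Ne.symm hjk))]
  have h2 : (∑ j ∈ Finset.univ.erase k, A k j * ‖v j‖) * q k
      ≤ (∑ j ∈ Finset.univ.erase k, A k j * q j) * ‖v k‖ := by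
    rw [Finset.sum_mul, Finset.sum_mul]
    refine Finset.sum_le_sum fun j hj => ?_
    have hjk : j ≠ k := Finset.ne_of_mem_erase hj
    have hA : 0 ≤ A k j := hM k j (Ne.symm hjk)
    calc A k j * ‖v j‖ * q k = A k j * (‖v j‖ * q k) := by ring
      _ ≤ A k j * (‖v k‖ * q j) := by
          exact mul_le_mul_of_nonneg_left (key j) hA
      _ = A k j * q j * ‖v k‖ := by ring
  have hre : μ.re - A k k ≤ ‖μ - (A k k : ℂ)‖ := by
    have := Complex.re_le_norm (μ - (A k k : ℂ))
    simpa using this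
  have hAqk : (A *ᵥ q) k = A k k * q k + ∑ j ∈ Finset.univ.erase k, A k j * q j := by
    simp only [Matrix.mulVec, dotProduct]
    rw [← Finset.sum_erase_add Finset.univ _ (Finset.mem_univ k)]
    ring
  have hneg := hAq k
  nlinarith [mul_le_mul_of_nonneg_right hre (mul_nonneg (norm_nonneg (v k)) (hq k).le),
    mul_le_mul_of_nonneg_right h1 (hq k).le, h2, mul_pos hvk (hq k), hvk, hq k,
    mul_lt_mul_of_pos_right hneg hvk]

section Neumann
attribute [local instance] Matrix.linftyOpNormedRing Matrix.linftyOpNormedAlgebra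

variable {n : ℕ}

/-- The continuous linear functional `M ↦ (M *ᵥ w) j`. -/
def phiCLM (w : Fin n → ℝ) (j : Fin n) : Matrix (Fin n) (Fin n) ℝ →L[ℝ] ℝ :=
  LinearMap.mkContinuous
    { toFun := fun M => (M *ᵥ w) j
      map_add' := fun M M' => by simp [Matrix.add_mulVec]
      map_smul' := fun c M => by simp [Matrix.smul_mulVec] }
    ‖w‖ (fun M => by
      calc ‖(M *ᵥ w) j‖ ≤ ‖M *ᵥ w‖ := norm_le_pi_norm (M *ᵥ w) j
        _ ≤ ‖M‖ * ‖w‖ := Matrix.linfty_opNorm_mulVec M w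
        _ = ‖w‖ * ‖M‖ := mul_comm _ _)

@[simp] lemma phiCLM_apply (w : Fin n → ℝ) (j : Fin n) (M : Matrix (Fin n) (Fin n) ℝ) :
    phiCLM w j M = (M *ᵥ w) j := rfl

lemma nnnorm_map_ofReal (M : Matrix (Fin n) (Fin n) ℝ) :
    ‖M.map Complex.ofReal‖ = ‖M‖ := by
  rw [← coe_nnnorm, ← coe_nnnorm]
  congr 1
  rw [Matrix.linfty_opNNNorm_def, Matrix.linfty_opNNNorm_def]
  congr 1
  ext i
  congr 1
  ext j
  · simp [Matrix.map_apply]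

lemma map_ofReal_pow (M : Matrix (Fin n) (Fin n) ℝ) (k : ℕ) :
    (M.map Complex.ofReal) ^ k = (M ^ k).map Complex.ofReal := by
  have : ∀ P : Matrix (Fin n) (Fin n) ℝ, P.map Complex.ofReal =
      (Complex.ofRealHom.mapMatrix : Matrix (Fin n) (Fin n) ℝ →+* _) P := fun _ => rfl
  rw [this, this, ← map_pow]

lemma pow_entry_nonneg {N : Matrix (Fin n) (Fin n) ℝ} (hN : ∀ i j, 0 ≤ N i j) :
    ∀ k i j, 0 ≤ (N ^ k) i j := by
  intro k
  induction k with
  | zero => intro i j; by_cases h : i = j <;> simp [Matrix.one_apply, h]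
  | succ k ih =>
    intro i j
    rw [pow_succ, Matrix.mul_apply]
    exact Finset.sum_nonneg fun c _ => mul_nonneg (ih i c) (hN c j)

theorem neumann (N : Matrix (Fin n) (Fin n) ℝ) (hN : ∀ i j, 0 ≤ N i j)
    {r t : ℝ} (hr : 0 ≤ r) (hrt : r < t)
    (hroots : ∀ μ : ℂ, ((N.map Complex.ofReal).charpoly).IsRoot μ → ‖μ‖ ≤ r) :
    ∃ S : Matrix (Fin n) (Fin n) ℝ,
      (t • (1 : Matrix (Fin n) (Fin n) ℝ) - N) * S = 1 ∧
      S * (t • (1 : Matrix (Fin n) (Fin n) ℝ) - N) = 1 ∧ (∀ i j, 0 ≤ S i j) ∧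
      ∀ w : Fin n → ℝ, (∀ k i, r ^ k * w i ≤ ((N ^ k) *ᵥ w) i) →
        ∀ j, w j / (t - r) ≤ (S *ᵥ w) j := by
  have ht : 0 < t := lt_of_le_of_lt hr hrt
  set Nc := N.map Complex.ofReal with hNc
  -- spectral radius bound
  have hrho : spectralRadius ℂ Nc ≤ ENNReal.ofReal r := by
    rw [spectralRadius]
    refine iSup₂_le fun z hz => ?_
    have hz1 : ¬IsUnit (z • (1 : Matrix (Fin n) (Fin n) ℂ) - Nc) := by
      have := spectrum.mem_iff.1 hz
      rwa [Algebra.algebraMap_eq_smul_one] at this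
    have hdet : (z • (1 : Matrix (Fin n) (Fin n) ℂ) - Nc).det = 0 := by
      by_contra hne
      exact hz1 ((Matrix.isUnit_iff_isUnit_det _).2 (isUnit_iff_ne_zero.2 hne))
    have hzr : ‖z‖ ≤ r := hroots z (by rwa [IsRoot, eval_charpoly'])
    calc (‖z‖₊ : ENNReal) = ENNReal.ofReal ‖z‖ := (ofReal_norm z).symm
      _ ≤ ENNReal.ofReal r := ENNReal.ofReal_le_ofReal (by exact hzr)
  set u : ℝ := (r + t) / 2 with hu
  have hru : r < u := by simp [hu]; linarith
  have hut : u < t := by simp [hu]; linarith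
  have hu0 : 0 < u := lt_of_le_of_lt hr hru
  have hgel := spectrum.pow_nnnorm_pow_one_div_tendsto_nhds_spectralRadius Nc
  have hlt : spectralRadius ℂ Nc < ENNReal.ofReal u :=
    lt_of_le_of_lt hrho ((ENNReal.ofReal_lt_ofReal_iff hu0).2 hru)
  have hev : ∀ᶠ k : ℕ in atTop, (‖Nc ^ k‖₊ : ENNReal) ^ (1 / (k : ℝ)) < ENNReal.ofReal u :=
    hgel.eventually_lt_const hlt
  have hbound : ∀ᶠ k : ℕ in atTop, ‖N ^ k‖ ≤ u ^ k := by
    filter_upwards [hev, eventually_ge_atTop 1] with k hk hk1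
    have hkR : (0 : ℝ) < (k : ℝ) := by exact_mod_cast hk1
    have h1 : ((‖Nc ^ k‖₊ : ENNReal) ^ (1 / (k : ℝ))) ^ (k : ℝ) ≤
        (ENNReal.ofReal u) ^ (k : ℝ) :=
      ENNReal.rpow_le_rpow hk.le hkR.le
    rw [← ENNReal.rpow_mul, one_div, inv_mul_cancel₀ hkR.ne', ENNReal.rpow_one,
      ENNReal.ofReal_rpow_of_pos hu0, Real.rpow_natCast] at h1
    rw [← enorm_eq_nnnorm, ← ofReal_norm] at h1
    have h2 : ‖Nc ^ k‖ ≤ u ^ k :=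
      (ENNReal.ofReal_le_ofReal_iff (pow_nonneg hu0.le k)).1 h1
    rwa [map_ofReal_pow, nnnorm_map_ofReal] at h2
  -- summability of the Neumann series
  set f : ℕ → Matrix (Fin n) (Fin n) ℝ := fun k => (1 / t) ^ (k + 1) • N ^ k with hf
  have hgeo : Summable (fun k : ℕ => (1 / t) * (u / t) ^ k) :=
    (summable_geometric_of_lt_one (by positivity) (by
      rw [div_lt_one ht]; exact hut)).mul_left _
  have hfs : Summable f := by
    refine Summable.of_norm_bounded_eventually_nat hgeo ?_
    filter_upwards [hbound] with k hk
    rw [hf]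
    simp only [norm_smul, Real.norm_eq_abs, abs_pow, abs_div, abs_one]
    rw [abs_of_pos ht]
    calc (1 / t) ^ (k + 1) * ‖N ^ k‖ ≤ (1 / t) ^ (k + 1) * u ^ k := by
          exact mul_le_mul_of_nonneg_left hk (by positivity)
      _ = 1 / t * (u / t) ^ k := by rw [pow_succ]; field_simp; ring
  set S := ∑' k, f k with hS
  have hSsum : HasSum f S := hfs.hasSum
  -- telescoping : (t•1 - N) * S = 1
  set L : Matrix (Fin n) (Fin n) ℝ := t • (1 : Matrix (Fin n) (Fin n) ℝ) - N with hL
  have hterm : ∀ k : ℕ, L * f k = (1 / t) ^ k • N ^ k - (1 / t) ^ (k + 1) • N ^ (k + 1) := by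
    intro k
    rw [hf, hL]
    simp only [Matrix.sub_mul, Matrix.smul_mul, Matrix.one_mul, mul_smul_comm, smul_smul]
    have h1 : (1 / t) ^ (k + 1) * t = (1 / t) ^ k := by
      rw [pow_succ, mul_assoc, one_div, inv_mul_cancel₀ ht.ne', mul_one]
    rw [smul_sub, smul_smul, h1, ← pow_succ' N k]
  have hmulsum : HasSum (fun k => L * f k) (L * S) := by
    have := (ContinuousLinearMap.mul ℝ (Matrix (Fin n) (Fin n) ℝ) L).hasSum hSsum
    exact this
  have hps : ∀ K : ℕ, ∑ k ∈ Finset.range K, (L * f k) = 1 - (1 / t) ^ K • N ^ K := by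
    intro K
    calc ∑ k ∈ Finset.range K, (L * f k)
        = ∑ k ∈ Finset.range K, ((fun k => (1 / t) ^ k • N ^ k) k
            - (fun k => (1 / t) ^ k • N ^ k) (k + 1)) := by
          exact Finset.sum_congr rfl fun k _ => hterm k
      _ = (1 / t) ^ 0 • N ^ 0 - (1 / t) ^ K • N ^ K := Finset.sum_range_sub' _ K
      _ = 1 - (1 / t) ^ K • N ^ K := by simp
  have htail : Tendsto (fun K : ℕ => (1 / t) ^ K • N ^ K) atTop (𝓝 0) := by
    refine squeeze_zero_norm' (a := fun K : ℕ => (u / t) ^ K) ?_ ?_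
    · filter_upwards [hbound] with K hK
      rw [norm_smul, Real.norm_eq_abs, abs_pow, abs_div, abs_one, abs_of_pos ht, div_pow,
        one_pow]
      rw [div_pow]
      calc 1 / t ^ K * ‖N ^ K‖ ≤ 1 / t ^ K * u ^ K := by
            exact mul_le_mul_of_nonneg_left hK (by positivity)
        _ = u ^ K / t ^ K := by ring
    · exact tendsto_pow_atTop_nhds_zero_of_lt_one (by positivity)
        (by rw [div_lt_one ht]; exact hut)
  have hLS : L * S = 1 := by
    have h2 : Tendsto (fun K : ℕ => ∑ k ∈ Finset.range K, (L * f k)) atTop (𝓝 1) := by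
      simp only [hps]
      have := (tendsto_const_nhds :
        Tendsto (fun _ : ℕ => (1 : Matrix (Fin n) (Fin n) ℝ)) atTop (𝓝 1)).sub htail
      simpa using this
    exact tendsto_nhds_unique hmulsum.tendsto_sum_nat h2
  have hSL : S * L = 1 := mul_eq_one_comm.1 hLS
  -- entrywise formulas via the functional
  have hphi : ∀ (w : Fin n → ℝ) (j : Fin n),
      HasSum (fun k => (1 / t) ^ (k + 1) * ((N ^ k *ᵥ w) j)) ((S *ᵥ w) j) := by
    intro w j
    have := (phiCLM w j).hasSum hSsum
    simp only [phiCLM_apply, hf, Matrix.smul_mulVec, Pi.smul_apply,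
      smul_eq_mul] at this
    exact this
  have hSnn : ∀ i j, 0 ≤ S i j := by
    intro i j
    have h1 := hphi (Pi.single j 1) i
    have h2 : (S *ᵥ Pi.single j 1) i = S i j := by
      simp [Matrix.mulVec_single]
    rw [h2] at h1
    refine hasSum_le (g := fun k => (1 / t) ^ (k + 1) * ((N ^ k *ᵥ Pi.single j 1) i)) ?_
      hasSum_zero h1
    intro k
    simp only [Matrix.mulVec_single, mul_one, MulOpposite.op_one, one_smul, Matrix.col_apply]
    exact mul_nonneg (by positivity) (pow_entry_nonneg hN k i j)
  refine ⟨S, hLS, hSL, hSnn, ?_⟩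
  intro w hw j
  have h1 := hphi w j
  have hgs : HasSum (fun k : ℕ => (1 / t) ^ (k + 1) * (r ^ k * w j)) (w j / (t - r)) := by
    have hbase : HasSum (fun k : ℕ => (r / t) ^ k) (1 - r / t)⁻¹ :=
      hasSum_geometric_of_lt_one (by positivity) (by rw [div_lt_one ht]; exact hrt)
    have h3 := hbase.mul_left (w j / t)
    have heq : (fun k : ℕ => w j / t * (r / t) ^ k)
        = fun k : ℕ => (1 / t) ^ (k + 1) * (r ^ k * w j) := by
      funext k
      rw [div_pow, div_pow, one_pow]
      field_simp
      ring
    rw [heq] at h3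
    have hval : w j / t * (1 - r / t)⁻¹ = w j / (t - r) := by
      have h5 : (1 - r / t) = (t - r) / t := by field_simp
      rw [h5, inv_div, div_mul_div_comm, mul_comm t (t - r), mul_div_mul_right _ _ ht.ne']
    rwa [hval] at h3
  refine hasSum_le ?_ hgs h1
  intro k
  exact mul_le_mul_of_nonneg_left (hw k j) (by positivity)

end Neumann
lemma lp_of_hurwitz {n : ℕ} (hn : 0 < n) (A : Matrix (Fin n) (Fin n) ℝ)
    (hM : ∀ i j, i ≠ j → 0 ≤ A i j) (hH : IsHurwitz A) :
    ∃ q : Fin n → ℝ, (∀ i, 0 < q i) ∧ ∀ i, (A *ᵥ q) i < 0 := by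
  set s : ℝ := 1 + ∑ i, |A i i| with hs
  have hs0 : 0 < s := by
    have h0 : 0 ≤ ∑ i, |A i i| := Finset.sum_nonneg fun i _ => abs_nonneg _
    rw [hs]; linarith
  set N : Matrix (Fin n) (Fin n) ℝ := A + s • 1 with hN
  have hNnn : ∀ i j, 0 ≤ N i j := by
    intro i j
    by_cases h : i = j
    · subst h
      have h1 : N i i = A i i + s := by simp [hN, Matrix.one_apply]
      have h2 : |A i i| ≤ ∑ c, |A c c| :=
        Finset.single_le_sum (f := fun c => |A c c|) (fun c _ => abs_nonneg _) (Finset.mem_univ i)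
      have h3 := neg_abs_le (A i i)
      rw [h1, hs]; linarith
    · have h1 : N i j = A i j := by simp [hN, Matrix.one_apply, h]
      rw [h1]; exact hM i j h
  set Nc := N.map Complex.ofReal with hNc
  have hshift : ∀ z : ℂ, Nc.charpoly.IsRoot z ↔ (A.map Complex.ofReal).charpoly.IsRoot (z - ↑s) := by
    intro z
    have hmat : z • (1 : Matrix (Fin n) (Fin n) ℂ) - Nc
        = (z - ↑s) • (1 : Matrix (Fin n) (Fin n) ℂ) - A.map Complex.ofReal := by
      ext i j
      by_cases h : i = j
      · simp only [hNc, hN, Matrix.sub_apply, Matrix.smul_apply, Matrix.one_apply_eq, h,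
          Matrix.map_apply, Matrix.add_apply, smul_eq_mul, mul_one]
        push_cast
        ring
      · simp only [hNc, hN, Matrix.sub_apply, Matrix.smul_apply, Matrix.one_apply_ne h,
          Matrix.map_apply, Matrix.add_apply, smul_eq_mul, mul_zero]
        push_cast
        ring
    rw [IsRoot, IsRoot, eval_charpoly', eval_charpoly', hmat]
  have hmonic := Matrix.charpoly_monic Nc
  have hdeg : Nc.charpoly.natDegree = n := by
    simpa using Matrix.charpoly_natDegree_eq_dim Nc
  have hdeg0 : 0 < Nc.charpoly.degree := by
    rw [Polynomial.degree_eq_natDegree hmonic.ne_zero, hdeg]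
    exact_mod_cast hn
  obtain ⟨z0, hz0⟩ := Complex.exists_root hdeg0
  have hmem : ∀ z : ℂ, Nc.charpoly.IsRoot z → z ∈ Nc.charpoly.roots.toFinset := fun z hz => by
    rw [Multiset.mem_toFinset, Polynomial.mem_roots hmonic.ne_zero]
    exact hz
  obtain ⟨lam, hlmem, hlmax⟩ := Finset.exists_max_image Nc.charpoly.roots.toFinset (fun z : ℂ => ‖z‖)
    ⟨z0, hmem _ hz0⟩
  have hlroot : Nc.charpoly.IsRoot lam :=
    (Polynomial.mem_roots hmonic.ne_zero).1 (Multiset.mem_toFinset.1 hlmem)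
  set r := ‖lam‖ with hr
  have hr0 : 0 ≤ r := norm_nonneg lam
  have hroots_le : ∀ μ : ℂ, Nc.charpoly.IsRoot μ → ‖μ‖ ≤ r := fun μ hμ =>
    hlmax μ (hmem μ hμ)
  obtain ⟨v, hv0, hv⟩ := exists_eigenvec Nc lam hlroot
  set w : Fin n → ℝ := fun i => ‖v i‖ with hw
  obtain ⟨j0, hj0⟩ := Function.ne_iff.1 hv0
  have hwj0 : 0 < w j0 := by
    rw [hw]
    simpa using hj0
  have hNw : ∀ i, r * w i ≤ (N *ᵥ w) i := by
    intro i
    have h1 : ‖(Nc *ᵥ v) i‖ = r * w i := by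
      rw [hv]
      simp [hw, hr, _root_.map_mul]
    have h3 : ‖(Nc *ᵥ v) i‖ ≤ ∑ c, N i c * w c := by
      have he : (Nc *ᵥ v) i = ∑ c, (N i c : ℂ) * v c := by
        simp [Matrix.mulVec, dotProduct, hNc, Matrix.map_apply]
      rw [he]
      refine le_trans (norm_sum_le _ _) (le_of_eq (Finset.sum_congr rfl fun c _ => ?_))
      rw [norm_mul, Complex.norm_real, Real.norm_eq_abs, abs_of_nonneg (hNnn i c)]
    have h4 : (N *ᵥ w) i = ∑ c, N i c * w c := by
      simp [Matrix.mulVec, dotProduct]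
    rw [h4, ← h1]
    exact h3
  have hNwk : ∀ (k : ℕ) (i : Fin n), r ^ k * w i ≤ ((N ^ k) *ᵥ w) i := by
    intro k
    induction k with
    | zero => intro i; simp [Matrix.one_mulVec]
    | succ k ih =>
      intro i
      have h1 : (N ^ (k + 1)) *ᵥ w = (N ^ k) *ᵥ (N *ᵥ w) := by
        rw [Matrix.mulVec_mulVec, ← pow_succ]
      rw [h1]
      have h2 : ∑ c, (N ^ k) i c * (r * w c) ≤ (N ^ k *ᵥ (N *ᵥ w)) i := by
        simp only [Matrix.mulVec, dotProduct]
        refine Finset.sum_le_sum fun c _ => ?_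
        refine mul_le_mul_of_nonneg_left ?_ (pow_entry_nonneg hNnn k i c)
        exact hNw c
      have h3 : ∑ c, (N ^ k) i c * (r * w c) = r * ((N ^ k *ᵥ w) i) := by
        simp only [Matrix.mulVec, dotProduct, Finset.mul_sum]
        exact Finset.sum_congr rfl fun c _ => by ring
      have h4 : r * (r ^ k * w i) ≤ r * ((N ^ k *ᵥ w) i) :=
        mul_le_mul_of_nonneg_left (ih i) hr0
      calc r ^ (k + 1) * w i = r * (r ^ k * w i) := by ring
        _ ≤ r * ((N ^ k *ᵥ w) i) := h4
        _ = ∑ c, (N ^ k) i c * (r * w c) := h3.symm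
        _ ≤ (N ^ k *ᵥ (N *ᵥ w)) i := h2
  -- `r` is a root of the characteristic polynomial of `N`
  have hdetr : ((r : ℝ) • (1 : Matrix (Fin n) (Fin n) ℝ) - N).det = 0 := by
    set P : Polynomial ℝ := N.charpoly with hP
    set Q : Polynomial ℝ := (((X : Polynomial ℝ) • (1 : Matrix (Fin n) (Fin n) (Polynomial ℝ))
        - N.map C).updateCol j0 fun i => C (w i)).det with hQ
    have hQe : ∀ t : ℝ,
        Q.eval t = ((t • (1 : Matrix (Fin n) (Fin n) ℝ) - N).updateCol j0 w).det := by
      intro t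
      rw [hQ, ← coe_evalRingHom, RingHom.map_det]
      congr 1
      ext i c
      by_cases h : c = j0
      · simp [Matrix.map_apply, Matrix.updateCol_apply, h]
      · by_cases h2 : i = c <;>
          simp [Matrix.map_apply, Matrix.updateCol_apply, h, h2, Matrix.one_apply]
    have hineq : ∀ t : ℝ, r < t → w j0 * |P.eval t| ≤ (t - r) * |Q.eval t| := by
      intro t hrt
      obtain ⟨S, hLS, hSL, hSnn, hlow⟩ := neumann N hNnn hr0 hrt hroots_le
      set L : Matrix (Fin n) (Fin n) ℝ := t • (1 : Matrix (Fin n) (Fin n) ℝ) - N with hL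
      have hSw := hlow w hNwk j0
      have hdetu : IsUnit L.det := Matrix.isUnit_det_of_right_inverse hLS
      have hdet0 : L.det ≠ 0 := hdetu.ne_zero
      have hinv : L⁻¹ = S := Matrix.inv_eq_right_inv hLS
      have hform : (S *ᵥ w) j0 = (L.det)⁻¹ * (L.updateCol j0 w).det := by
        rw [← hinv, Matrix.inv_def, Matrix.smul_mulVec,
          ← Matrix.cramer_eq_adjugate_mulVec]
        simp [Matrix.cramer_apply, Ring.inverse_eq_inv']
      have hPt : P.eval t = L.det := by rw [hP, eval_charpoly']
      have hQt : Q.eval t = (L.updateCol j0 w).det := hQe t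
      rw [hform] at hSw
      rw [hPt, hQt]
      set d := L.det with hd
      set c := (L.updateCol j0 w).det with hc
      have htr : (0:ℝ) < t - r := by linarith
      have h2 : w j0 / (t - r) ≤ |d|⁻¹ * |c| := by
        refine le_trans hSw (le_trans (le_abs_self _) (le_of_eq ?_))
        rw [abs_mul, abs_inv]
      have h3 : w j0 ≤ |d|⁻¹ * |c| * (t - r) := (div_le_iff₀ htr).1 h2
      have h5 : 0 < |d| := abs_pos.2 hdet0
      calc w j0 * |d| ≤ |d|⁻¹ * |c| * (t - r) * |d| :=
            mul_le_mul_of_nonneg_right h3 (abs_nonneg d)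
        _ = (t - r) * |c| * (|d|⁻¹ * |d|) := by ring
        _ = (t - r) * |c| := by rw [inv_mul_cancel₀ h5.ne', mul_one]
    have hF : Tendsto (fun t : ℝ => w j0 * |P.eval t|) (nhdsWithin r (Set.Ioi r))
        (nhds (w j0 * |P.eval r|)) := by
      refine Tendsto.mono_left ?_ nhdsWithin_le_nhds
      exact ((continuous_const.mul (continuous_abs.comp P.continuous)).tendsto r)
    have hG : Tendsto (fun t : ℝ => (t - r) * |Q.eval t|) (nhdsWithin r (Set.Ioi r))
        (nhds ((r - r) * |Q.eval r|)) := by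
      refine Tendsto.mono_left ?_ nhdsWithin_le_nhds
      exact (((continuous_id.sub continuous_const).mul
        (continuous_abs.comp Q.continuous)).tendsto r)
    have hle : w j0 * |P.eval r| ≤ (r - r) * |Q.eval r| :=
      le_of_tendsto_of_tendsto hF hG (eventually_nhdsWithin_of_forall fun t ht => hineq t ht)
    rw [sub_self, zero_mul] at hle
    have habs0 : |P.eval r| = 0 := le_antisymm (by nlinarith) (abs_nonneg _)
    have : P.eval r = 0 := abs_eq_zero.1 habs0
    rwa [hP, eval_charpoly'] at this
  -- hence r < s by the Hurwitz property
  have hrs : r < s := by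
    have hrootr : Nc.charpoly.IsRoot (r : ℂ) := by
      have h1 : ((r : ℝ) • (1 : Matrix (Fin n) (Fin n) ℝ) - N).map Complex.ofReal
          = (r : ℂ) • (1 : Matrix (Fin n) (Fin n) ℂ) - Nc := by
        ext i j
        by_cases h : i = j <;>
          simp [Matrix.map_apply, h, Matrix.one_apply, hNc]
      have h2 : ((r : ℂ) • (1 : Matrix (Fin n) (Fin n) ℂ) - Nc).det = 0 := by
        rw [← h1]
        have h4 : (((r : ℝ) • (1 : Matrix (Fin n) (Fin n) ℝ) - N).map Complex.ofReal).det
            = Complex.ofReal (((r : ℝ) • (1 : Matrix (Fin n) (Fin n) ℝ) - N).det) := by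
          rw [show Complex.ofReal = ⇑Complex.ofRealHom from rfl, ← RingHom.mapMatrix_apply,
            ← RingHom.map_det]
        rw [h4, hdetr]
        simp
      rw [IsRoot, eval_charpoly']
      exact h2
    have h4 := hH _ ((hshift (r : ℂ)).1 hrootr)
    have h5 : ((r : ℂ) - (s : ℂ)).re = r - s := by simp
    rw [h5] at h4
    linarith
  -- apply the Neumann series at `t = s`
  obtain ⟨S, hLS, hSL, hSnn, -⟩ := neumann N hNnn hr0 hrs hroots_le
  have hAeq : A = -(s • (1 : Matrix (Fin n) (Fin n) ℝ) - N) := by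
    rw [hN]; abel
  refine ⟨S *ᵥ fun _ => 1, ?_, ?_⟩
  · intro i
    have hnn : 0 ≤ (S *ᵥ fun _ => 1) i := by
      simp only [Matrix.mulVec, dotProduct, mul_one]
      exact Finset.sum_nonneg fun c _ => hSnn i c
    rcases lt_or_eq_of_le hnn with h | h
    · exact h
    exfalso
    have hrow : ∀ c, S i c = 0 := by
      have hsum : ∑ c, S i c = 0 := by
        have : (S *ᵥ fun _ => 1) i = ∑ c, S i c := by
          simp [Matrix.mulVec, dotProduct]
        rw [this] at h
        exact h.symm
      intro c
      exact (Finset.sum_eq_zero_iff_of_nonneg fun c _ => hSnn i c).1 hsum c (Finset.mem_univ c)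
    have h1 : (S * (s • (1 : Matrix (Fin n) (Fin n) ℝ) - N)) i i = 0 := by
      rw [Matrix.mul_apply]
      exact Finset.sum_eq_zero fun c _ => by rw [hrow c, zero_mul]
    rw [hSL] at h1
    simp at h1
  · intro i
    have h2 : A *ᵥ (S *ᵥ fun _ => 1) = -fun _ => (1:ℝ) := by
      rw [hAeq, Matrix.neg_mulVec, Matrix.mulVec_mulVec, hLS, Matrix.one_mulVec]
    rw [h2]
    norm_num


/-- For a Metzler matrix `A`, the LP condition with the block matrix
`Â = [[A↑, A↓],[A↓, A↑]]` (where `A↑ = A^d + (A^od)⁺`, `A↓ = (A^od)⁻`) is both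
necessary and sufficient for `A` to be Hurwitz. -/
theorem metzler_hurwitz_iff_block_lp {n : ℕ} (A : Matrix (Fin n) (Fin n) ℝ)
    (hMetzler : ∀ i j : Fin n, i ≠ j → 0 ≤ A i j)
    (Aup Adown : Matrix (Fin n) (Fin n) ℝ)
    (hup : Aup = diagPart A + matPos (A - diagPart A))
    (hdown : Adown = matNeg (A - diagPart A)) :
    IsHurwitz A ↔ ∃ p : Fin n ⊕ Fin n → ℝ, (∀ i, 0 < p i) ∧
      ∀ i, (Matrix.fromBlocks Aup Adown Adown Aup *ᵥ p) i < 0 := by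
  have hup2 : Aup = A := by
    rw [hup]
    ext i j
    by_cases h : i = j
    · subst h; simp [diagPart, matPos]
    · simp [diagPart, matPos, h, max_eq_left (hMetzler i j h)]
  have hdown2 : Adown = 0 := by
    rw [hdown]
    ext i j
    by_cases h : i = j
    · subst h; simp [matNeg, matPos, diagPart]
    · simp [matNeg, matPos, diagPart, h, max_eq_left (hMetzler i j h)]
  rw [hup2, hdown2]
  constructor
  · intro hH
    rcases Nat.eq_zero_or_pos n with hn | hn
    · subst hn
      refine ⟨fun _ => 1, fun i => one_pos, fun i => ?_⟩
      cases i with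
      | inl a => exact a.elim0
      | inr a => exact a.elim0
    obtain ⟨q, hq, hAq⟩ := lp_of_hurwitz hn A hMetzler hH
    refine ⟨Sum.elim q q, fun i => by cases i <;> exact hq _, fun i => ?_⟩
    rw [Matrix.fromBlocks_mulVec]
    cases i with
    | inl i =>
      simpa using hAq i
    | inr i =>
      simpa using hAq i
  · rintro ⟨p, hp, hAp⟩
    refine hurwitz_of_lp A hMetzler (fun i => p (Sum.inl i)) (fun i => hp _) fun i => ?_
    have h1 := hAp (Sum.inl i)
    rw [Matrix.fromBlocks_mulVec] at h1
    simpa [Function.comp_def] using h1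
end
end
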